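/- arXiv:1505.01323 — 13 statements merged into one kernel-verified Lean document; each statement's English description precedes it below -/
import Mathlib

section
/- Let X be a group and G = {g₁,…,g_m} a finite set of pairwise distinct generators of X which is closed under inversion and does not contain the identity e. Let j₁,…,j_m and k₁,…,k_m be positive real constants. Then the following are equivalent: (1) there exists ψ : X → ℝ such that k_i = exp(ψ(z·g_i) − ψ(z))·j_i for all z ∈ X and all 1 ≤ i ≤ m; (2) for every n ≥ 1 and every (i₁,…,i_n) ∈ {1,…,m}ⁿ with g_{i₁}⋯g_{i_n} = e, one has j_{i₁}⋯j_{i_n} = k_{i₁}⋯k_{i_n}. -/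
/-- On the Cayley graph of a group `X` with a finite symmetric generating set
`{g₁, …, g_m}` (pairwise distinct, closed under inversion, not containing the identity), two
families of positive translation-invariant intensities `(jᵢ)` and `(kᵢ)` are related by a
multiplicative potential `ψ` if and only if `j_{i₁}⋯j_{i_n} = k_{i₁}⋯k_{i_n}` for every word
`(i₁,…,i_n)` with `g_{i₁}⋯g_{i_n} = e`. -/
theorem stmt4 {X : Type*} [Group X] (m : ℕ) (hm : 1 ≤ m) (g : Fin m → X)
    (hginj : Function.Injective g)
    (hgen : Subgroup.closure (Set.range g) = ⊤)
    (hinv : ∀ i : Fin m, ∃ i' : Fin m, g i' = (g i)⁻¹)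
    (hne : ∀ i : Fin m, g i ≠ 1)
    (j k : Fin m → ℝ) (hj : ∀ i, 0 < j i) (hk : ∀ i, 0 < k i) :
    (∃ ψ : X → ℝ, ∀ (z : X) (i : Fin m),
        k i = Real.exp (ψ (z * g i) - ψ z) * j i) ↔
      (∀ l : List (Fin m), l ≠ [] → (l.map g).prod = 1 →
        (l.map j).prod = (l.map k).prod) := by
  have hJpos : ∀ l : List (Fin m), 0 < (l.map j).prod := by
    intro l
    apply List.prod_pos
    intro a ha
    obtain ⟨i, -, rfl⟩ := List.mem_map.mp ha
    exact hj i
  have hKpos : ∀ l : List (Fin m), 0 < (l.map k).prod := by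
    intro l
    apply List.prod_pos
    intro a ha
    obtain ⟨i, -, rfl⟩ := List.mem_map.mp ha
    exact hk i
  constructor
  · rintro ⟨ψ, hψ⟩ l hl hprod
    have key : ∀ (l : List (Fin m)) (z : X),
        (l.map k).prod = Real.exp (ψ (z * (l.map g).prod) - ψ z) * (l.map j).prod := by
      intro l
      induction l with
      | nil => intro z; simp
      | cons i t ih =>
        intro z
        simp only [List.map_cons, List.prod_cons]
        rw [hψ z i, ih (z * g i)]
        rw [← mul_assoc z (g i)]
        have : Real.exp (ψ (z * g i) - ψ z) * Real.exp (ψ (z * g i * (t.map g).prod) - ψ (z * g i))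
            = Real.exp (ψ (z * g i * (t.map g).prod) - ψ z) := by
          rw [← Real.exp_add]; ring_nf
        calc Real.exp (ψ (z * g i) - ψ z) * j i *
              (Real.exp (ψ (z * g i * (t.map g).prod) - ψ (z * g i)) * (t.map j).prod)
            = (Real.exp (ψ (z * g i) - ψ z) *
                Real.exp (ψ (z * g i * (t.map g).prod) - ψ (z * g i))) *
              (j i * (t.map j).prod) := by ring
          _ = Real.exp (ψ (z * g i * (t.map g).prod) - ψ z) * (j i * (t.map j).prod) := by
              rw [this]
    have := key l 1
    rw [hprod, mul_one, sub_self, Real.exp_zero, one_mul] at this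
    exact this.symm
  · intro h
    -- padding pair
    set i0 : Fin m := ⟨0, hm⟩ with hi0def
    obtain ⟨i0', hi0'⟩ := hinv i0
    have hc : j i0 * j i0' = k i0 * k i0' := by
      have := h [i0, i0'] (by simp) (by simp [hi0'])
      simpa using this
    have hA : ∀ l : List (Fin m), (l.map g).prod = 1 →
        (l.map j).prod = (l.map k).prod := by
      intro l hl
      have h1 := h (l ++ [i0, i0']) (by simp) (by simp [hl, hi0'])
      simp only [List.map_append, List.prod_append, List.map_cons, List.map_nil,
        List.prod_cons, List.prod_nil, mul_one] at h1
      have hpos : (0:ℝ) < j i0 * j i0' := mul_pos (hj i0) (hj i0')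
      rw [hc] at h1
      exact mul_right_cancel₀ (mul_pos (hk i0) (hk i0')).ne' h1
    -- inverse words
    have hinvw : ∀ l : List (Fin m), ∃ l' : List (Fin m),
        (l'.map g).prod = ((l.map g).prod)⁻¹ := by
      intro l
      induction l with
      | nil => exact ⟨[], by simp⟩
      | cons i t ih =>
        obtain ⟨l', hl'⟩ := ih
        obtain ⟨i', hi'⟩ := hinv i
        exact ⟨l' ++ [i'], by simp [hl', hi', mul_inv_rev]⟩
    -- every element is a word
    have hword : ∀ x : X, ∃ l : List (Fin m), (l.map g).prod = x := by
      let W : Subgroup X :=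
      { carrier := {x | ∃ l : List (Fin m), (l.map g).prod = x}
        one_mem' := ⟨[], by simp⟩
        mul_mem' := by
          rintro a b ⟨la, rfl⟩ ⟨lb, rfl⟩
          exact ⟨la ++ lb, by simp⟩
        inv_mem' := by
          rintro a ⟨la, rfl⟩
          exact hinvw la }
      have hle : Subgroup.closure (Set.range g) ≤ W := by
        rw [Subgroup.closure_le]
        rintro _ ⟨i, rfl⟩
        exact ⟨[i], by simp⟩
      intro x
      exact hle (hgen ▸ Subgroup.mem_top x)
    -- same product implies same ratio
    have hsame : ∀ l l' : List (Fin m), (l.map g).prod = (l'.map g).prod →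
        (l.map j).prod * (l'.map k).prod = (l.map k).prod * (l'.map j).prod := by
      intro l l' heq
      obtain ⟨w0, hw0⟩ := hinvw l'
      have h1 := hA (l ++ w0) (by simp [hw0, heq])
      have h2 := hA (l' ++ w0) (by simp [hw0])
      simp only [List.map_append, List.prod_append] at h1 h2
      have h3 : (l.map j).prod * (l'.map k).prod * (w0.map j).prod
          = (l.map k).prod * (l'.map j).prod * (w0.map j).prod := by
        calc (l.map j).prod * (l'.map k).prod * (w0.map j).prod
            = ((l.map j).prod * (w0.map j).prod) * (l'.map k).prod := by ring
          _ = ((l.map k).prod * (w0.map k).prod) * (l'.map k).prod := by rw [h1]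
          _ = (l.map k).prod * ((l'.map k).prod * (w0.map k).prod) := by ring
          _ = (l.map k).prod * ((l'.map j).prod * (w0.map j).prod) := by rw [← h2]
          _ = (l.map k).prod * (l'.map j).prod * (w0.map j).prod := by ring
      exact mul_right_cancel₀ (hJpos w0).ne' h3
    choose w hw using hword
    refine ⟨fun x => Real.log ((w x).map k).prod - Real.log ((w x).map j).prod, ?_⟩
    intro z i
    have hs := hsame (w (z * g i)) (w z ++ [i]) (by simp [hw])
    simp only [List.map_append, List.prod_append, List.map_cons, List.map_nil,
      List.prod_cons, List.prod_nil, mul_one] at hs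
    have e1 : Real.exp (Real.log ((w (z * g i)).map k).prod
        - Real.log ((w (z * g i)).map j).prod)
        = ((w (z * g i)).map k).prod / ((w (z * g i)).map j).prod := by
      rw [Real.exp_sub, Real.exp_log (hKpos _), Real.exp_log (hJpos _)]
    have e0 : Real.exp (Real.log ((w z).map k).prod - Real.log ((w z).map j).prod)
        = ((w z).map k).prod / ((w z).map j).prod := by
      rw [Real.exp_sub, Real.exp_log (hKpos _), Real.exp_log (hJpos _)]
    rw [show (Real.log ((w (z * g i)).map k).prod - Real.log ((w (z * g i)).map j).prod)
        - (Real.log ((w z).map k).prod - Real.log ((w z).map j).prod)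
        = (Real.log ((w (z * g i)).map k).prod - Real.log ((w (z * g i)).map j).prod)
        - (Real.log ((w z).map k).prod - Real.log ((w z).map j).prod) from rfl,
      Real.exp_sub, e1, e0]
    have hJ1 := hJpos (w (z * g i))
    have hK1 := hKpos (w (z * g i))
    have hJ0 := hJpos (w z)
    have hK0 := hKpos (w z)
    field_simp
    nlinarith [hs, mul_pos hJ0 hK1]
end

section
/- Let d ≥ 1 and for σ ∈ {±1,…,±d} let g_σ := sign(σ)·e_{|σ|} ∈ ℤ^d, where e₁,…,e_d is the canonical basis. Let j_σ and k_σ be positive real constants for each σ. Then the following are equivalent: (1) there exists ψ : ℤ^d → ℝ such that k_σ = exp(ψ(z+g_σ) − ψ(z))·j_σ for all z ∈ ℤ^d and all σ; (2) j_i·j_{−i} = k_i·k_{−i} for every i = 1,…,d. -/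
/-- On the lattice `ℤ^d` with arcs `z → z ± eᵢ` (direction `σ = (i, b)` with
`b = true` for `+eᵢ` and `b = false` for `-eᵢ`), two families of positive translation-invariant
intensities `(j_σ)` and `(k_σ)` are related by a multiplicative potential `ψ` if and only if
`jᵢ · j₋ᵢ = kᵢ · k₋ᵢ` for every direction `i`. -/
theorem stmt5 (d : ℕ) (hd : 1 ≤ d)
    (j k : Fin d × Bool → ℝ) (hj : ∀ σ, 0 < j σ) (hk : ∀ σ, 0 < k σ) :
    (∃ ψ : (Fin d → ℤ) → ℝ, ∀ (z : Fin d → ℤ) (σ : Fin d × Bool),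
        k σ = Real.exp
            (ψ (z + (if σ.2 then Pi.single σ.1 (1 : ℤ) else -Pi.single σ.1 (1 : ℤ))) - ψ z)
          * j σ) ↔
      (∀ i : Fin d, j (i, true) * j (i, false) = k (i, true) * k (i, false)) := by
  constructor
  · rintro ⟨ψ, h⟩ i
    have h1 := h 0 (i, true)
    have h2 := h (Pi.single i 1) (i, false)
    simp only [if_true, if_false, Bool.false_eq_true, add_neg_cancel, zero_add] at h1 h2
    rw [h1, h2, mul_mul_mul_comm, ← Real.exp_add, sub_add_sub_cancel, sub_self,
      Real.exp_zero, one_mul]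
  · intro h
    set L : Fin d → ℝ := fun i => Real.log (k (i, true) / j (i, true)) with hL
    refine ⟨fun z => ∑ i, (z i : ℝ) * L i, ?_⟩
    intro z σ
    obtain ⟨i, b⟩ := σ
    have calc1 : ∀ s : Fin d → ℤ,
        (∑ i', (((z + s) i' : ℤ) : ℝ) * L i') - ∑ i', ((z i' : ℤ) : ℝ) * L i'
          = ∑ i', ((s i' : ℤ) : ℝ) * L i' := by
      intro s
      rw [← Finset.sum_sub_distrib]
      refine Finset.sum_congr rfl fun i' _ => ?_
      simp only [Pi.add_apply]
      push_cast
      ring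
    have hkj : 0 < k (i, true) / j (i, true) := div_pos (hk _) (hj _)
    cases b with
    | true =>
      simp only [if_true]
      rw [calc1]
      have : ∑ i', (((Pi.single i (1:ℤ) : Fin d → ℤ) i' : ℤ) : ℝ) * L i' = L i := by
        rw [Finset.sum_eq_single i]
        · simp
        · intro b _ hb; simp [Pi.single_apply, hb]
        · simp
      rw [this, hL, Real.exp_log hkj, div_mul_cancel₀]
      exact (hj _).ne'
    | false =>
      simp only [Bool.false_eq_true, if_false]
      rw [calc1]
      have : ∑ i', ((((-Pi.single i (1:ℤ) : Fin d → ℤ)) i' : ℤ) : ℝ) * L i' = -L i := by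
        rw [Finset.sum_eq_single i]
        · simp
        · intro b _ hb; simp [Pi.single_apply, hb]
        · simp
      rw [this, hL, Real.exp_neg, Real.exp_log hkj]
      rw [inv_div, div_mul_eq_mul_div, eq_div_iff (hk (i, true)).ne', mul_comm]
      exact (h i).symm
end

section
/- Let (𝒳,𝒜) be a locally finite directed graph and let j : (0,1)×𝒜 → (0,∞) be a jump intensity. Let φ : (0,1)×𝒳 → ℝ be such that t ↦ φ_t(z) is continuously differentiable for every z and φ solves the Hamilton–Jacobi–Bellman equation ∂_t φ_t(z) + ∑_{z' : (z,z')∈𝒜} j(t,z→z')·(exp(φ_t(z') − φ_t(z)) − 1) = 0 for all t ∈ (0,1) and z ∈ 𝒳. Define k(t,z→z') := exp(φ_t(z') − φ_t(z))·j(t,z→z'). Then k is a jump intensity and: (i) χ_a[k](t,z→z') = χ_a[j](t,z→z') for every t ∈ (0,1) and every arc (z→z'); (ii) χ_c[k](t,c) = χ_c[j](t,c) for every t ∈ (0,1) and every closed walk c. -/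
/-- Let `(𝒳, 𝒜)` be a locally finite directed graph (without loops), `j` a
(positive, continuously `t`-differentiable, with derivative data `j'`) jump intensity on
`(0,1) × 𝒜`, and `φ` a continuously differentiable classical solution (with derivative data
`φ'`) of the HJB equation.  Then `k(t, z→z') := exp(φ_t(z') − φ_t(z)) · j(t, z→z')` is a jump
intensity which has the same arc characteristics `χ_a` and the same closed-walk
characteristics `χ_c` as `j`. -/
theorem stmt7 {X : Type*} [Countable X] (A : Set (X × X))
    (hnoloop : ∀ z : X, (z, z) ∉ A)
    (hfin : ∀ z : X, {z' : X | (z, z') ∈ A}.Finite)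
    (j j' : ℝ → X → X → ℝ)
    (hjpos : ∀ t ∈ Set.Ioo (0 : ℝ) 1, ∀ z z' : X, (z, z') ∈ A → 0 < j t z z')
    (hjderiv : ∀ z z' : X, (z, z') ∈ A → ∀ t ∈ Set.Ioo (0 : ℝ) 1,
      HasDerivAt (fun s => j s z z') (j' t z z') t)
    (hjcont : ∀ z z' : X, (z, z') ∈ A →
      ContinuousOn (fun t => j' t z z') (Set.Ioo 0 1))
    (φ φ' : ℝ → X → ℝ)
    (hφderiv : ∀ z : X, ∀ t ∈ Set.Ioo (0 : ℝ) 1,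
      HasDerivAt (fun s => φ s z) (φ' t z) t)
    (hφcont : ∀ z : X, ContinuousOn (fun t => φ' t z) (Set.Ioo 0 1))
    (hHJB : ∀ t ∈ Set.Ioo (0 : ℝ) 1, ∀ z : X,
      φ' t z + ∑' z' : {w : X // (z, w) ∈ A},
        j t z z'.1 * (Real.exp (φ t z'.1 - φ t z) - 1) = 0)
    (k : ℝ → X → X → ℝ)
    (hk : ∀ (t : ℝ) (z z' : X), k t z z' = Real.exp (φ t z' - φ t z) * j t z z') :
    -- `k` is a jump intensity: positive and continuously `t`-differentiable on every arc
    ((∀ t ∈ Set.Ioo (0 : ℝ) 1, ∀ z z' : X, (z, z') ∈ A → 0 < k t z z') ∧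
      (∃ k' : ℝ → X → X → ℝ, ∀ z z' : X, (z, z') ∈ A →
        (∀ t ∈ Set.Ioo (0 : ℝ) 1, HasDerivAt (fun s => k s z z') (k' t z z') t) ∧
        ContinuousOn (fun t => k' t z z') (Set.Ioo 0 1))) ∧
    -- (i) equality of the arc characteristics, `χ_a[k] = χ_a[j]`
    (∀ t ∈ Set.Ioo (0 : ℝ) 1, ∀ z z' : X, (z, z') ∈ A →
      ∃ D : ℝ, HasDerivAt (fun s => Real.log (k s z z')) D t ∧
        D + (∑' w : {w : X // (z', w) ∈ A}, k t z' w.1)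
          - (∑' w : {w : X // (z, w) ∈ A}, k t z w.1) =
        j' t z z' / j t z z'
          + (∑' w : {w : X // (z', w) ∈ A}, j t z' w.1)
          - (∑' w : {w : X // (z, w) ∈ A}, j t z w.1)) ∧
    -- (ii) equality of the closed-walk characteristics, `χ_c[k] = χ_c[j]`
    (∀ t ∈ Set.Ioo (0 : ℝ) 1, ∀ (n : ℕ) (w : ℕ → X), 1 ≤ n →
      (∀ i < n, (w i, w (i + 1)) ∈ A) → w n = w 0 →
      ∏ i ∈ Finset.range n, k t (w i) (w (i + 1)) =
        ∏ i ∈ Finset.range n, j t (w i) (w (i + 1))) := by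

  have hksum : ∀ t ∈ Set.Ioo (0:ℝ) 1, ∀ z : X,
      (∑' w : {w : X // (z, w) ∈ A}, k t z w.1)
        = (∑' w : {w : X // (z, w) ∈ A}, j t z w.1) - φ' t z := by
    intro t ht z
    haveI : Fintype {w : X // (z, w) ∈ A} := (hfin z).fintype
    have hHJB' := hHJB t ht z
    rw [tsum_fintype] at hHJB' ⊢
    rw [tsum_fintype]
    have h1 : ∀ w : {w : X // (z, w) ∈ A}, k t z w.1
        = j t z w.1 * (Real.exp (φ t w.1 - φ t z) - 1) + j t z w.1 := by
      intro w; rw [hk]; ring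
    rw [Finset.sum_congr rfl (fun w _ => h1 w), Finset.sum_add_distrib]
    linarith
  refine ⟨⟨?_, ?_⟩, ?_, ?_⟩
  · intro t ht z z' hz
    rw [hk]
    exact mul_pos (Real.exp_pos _) (hjpos t ht z z' hz)
  · refine ⟨fun t z z' => Real.exp (φ t z' - φ t z) * (φ' t z' - φ' t z) * j t z z'
      + Real.exp (φ t z' - φ t z) * j' t z z', fun z z' hz => ⟨?_, ?_⟩⟩
    · intro t ht
      have hfun : (fun s => k s z z')
          = fun s => Real.exp (φ s z' - φ s z) * j s z z' := funext fun s => hk s z z'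
      rw [hfun]
      exact (((hφderiv z' t ht).sub (hφderiv z t ht)).exp).mul (hjderiv z z' hz t ht)
    · have hφc : ∀ y : X, ContinuousOn (fun t => φ t y) (Set.Ioo 0 1) :=
        fun y t ht => (hφderiv y t ht).continuousAt.continuousWithinAt
      have hjc : ContinuousOn (fun t => j t z z') (Set.Ioo 0 1) :=
        fun t ht => (hjderiv z z' hz t ht).continuousAt.continuousWithinAt
      exact ((((hφc z').sub (hφc z)).rexp.mul ((hφcont z').sub (hφcont z))).mul hjc).add
        ((((hφc z').sub (hφc z)).rexp).mul (hjcont z z' hz))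
  · intro t ht z z' hz
    refine ⟨φ' t z' - φ' t z + j' t z z' / j t z z', ?_, ?_⟩
    · have hD : HasDerivAt (fun s => φ s z' - φ s z + Real.log (j s z z'))
          (φ' t z' - φ' t z + j' t z z' / j t z z') t :=
        ((hφderiv z' t ht).sub (hφderiv z t ht)).add
          ((hjderiv z z' hz t ht).log (hjpos t ht z z' hz).ne')
      refine hD.congr_of_eventuallyEq ?_
      filter_upwards [isOpen_Ioo.mem_nhds ht] with s hs
      rw [hk, Real.log_mul (Real.exp_ne_zero _) (hjpos s hs z z' hz).ne',
        Real.log_exp]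
    · have h1 := hksum t ht z
      have h2 := hksum t ht z'
      rw [h1, h2]
      ring
  · intro t ht n w hn hA hclose
    calc ∏ i ∈ Finset.range n, k t (w i) (w (i + 1))
        = ∏ i ∈ Finset.range n,
            Real.exp (φ t (w (i + 1)) - φ t (w i)) * j t (w i) (w (i + 1)) :=
          Finset.prod_congr rfl (fun i _ => hk t (w i) (w (i + 1)))
      _ = ∏ i ∈ Finset.range n, j t (w i) (w (i + 1)) := by
          rw [Finset.prod_mul_distrib, ← Real.exp_sum,
            Finset.sum_range_sub (fun i => φ t (w i)), hclose, sub_self,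
            Real.exp_zero, one_mul]
end

section
/- Let (𝒳,𝒜) be a symmetric, connected, locally finite directed graph, let 𝒯 ⊆ 𝒜 be a spanning tree, and let j, k : (0,1)×𝒜 → (0,∞) be jump intensities. Assume that for all t ∈ (0,1): (i) χ_a[k](t,z→z') = χ_a[j](t,z→z') for every arc (z→z') ∈ 𝒯; (ii) χ_c[k](t,(z→z'→z)) = χ_c[j](t,(z→z'→z)) for every arc (z→z') ∈ 𝒜; (iii) for every arc (x→y) ∈ 𝒜 ∖ 𝒯, χ_c[k](t,f) = χ_c[j](t,f), where f is the closed walk obtained by concatenating (x→y) with the unique simple 𝒯-walk from y to x. Then for all t ∈ (0,1): χ_a[k](t,z→z') = χ_a[j](t,z→z') for every arc (z→z') ∈ 𝒜, and χ_c[k](t,c) = χ_c[j](t,c) for every closed walk c. -/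
/-!
Along a closed walk the total rates `k̄` telescope, so the arc characteristics sum to the
logarithmic `t`-derivative of the closed-walk characteristic. On the fundamental cycle of a
non-tree arc the closed-walk characteristics of `j` and `k` agree, and so do the arc
characteristics of all its other arcs, which are tree arcs; hence they agree on the non-tree arc.

For closed walks, `g = log k - log j` is antisymmetric on tree arcs, so it is the coboundary
`g z z' = ψ z' - ψ z` of its sums `ψ` along tree paths from a root. The fundamental cycles
extend this to all arcs, and the sum of a coboundary along a closed walk vanishes.
-/

open Finset

namespace ArcSet

variable {X : Type*}

def IsPath (T : Set (X × X)) (n : ℕ) (w : ℕ → X) : Prop :=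
  (∀ i < n, (w i, w (i + 1)) ∈ T) ∧ Set.InjOn w (Set.Iic n)

-- The walks of the spanning-tree hypothesis: the last vertex may repeat an earlier one.
def IsSimpleWalk (T : Set (X × X)) (x y : X) (n : ℕ) (w : ℕ → X) : Prop :=
  1 ≤ n ∧ w 0 = x ∧ w n = y ∧ (∀ i < n, (w i, w (i + 1)) ∈ T) ∧
    ∀ i j, i < n → j < n → w i = w j → i = j

def HasUniquePaths (T : Set (X × X)) : Prop :=
  ∀ x y : X, (∃ n w, w 0 = x ∧ w n = y ∧ IsPath T n w) ∧
    ∀ n w m v, w 0 = x → w n = y → IsPath T n w → v 0 = x → v m = y → IsPath T m v →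
      n = m ∧ ∀ i ≤ n, w i = v i

def consWalk (x : X) (w : ℕ → X) : ℕ → X
  | 0 => x
  | i + 1 => w i

theorem consWalk_mem {A : Set (X × X)} {x : X} {n : ℕ} {w : ℕ → X} (hx : (x, w 0) ∈ A)
    (hw : ∀ i < n, (w i, w (i + 1)) ∈ A) :
    ∀ i < n + 1, (consWalk x w i, consWalk x w (i + 1)) ∈ A
  | 0, _ => hx
  | i + 1, hi => hw i (by omega)

namespace IsPath

variable {T : Set (X × X)} {n : ℕ} {w : ℕ → X}

theorem zero (w : ℕ → X) : IsPath T 0 w :=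
  ⟨fun _ hi => absurd hi (Nat.not_lt_zero _),
    fun _ ha _ hb _ => (Nat.le_zero.mp ha).trans (Nat.le_zero.mp hb).symm⟩

theorem mono (h : IsPath T n w) {m : ℕ} (hm : m ≤ n) : IsPath T m w :=
  ⟨fun i hi => h.1 i (by omega), h.2.mono (Set.Iic_subset_Iic.mpr hm)⟩

theorem shift (h : IsPath T n w) {i : ℕ} (hi : i ≤ n) :
    IsPath T (n - i) (fun l => w (i + l)) :=
  ⟨fun l hl => h.1 (i + l) (by omega), fun a ha b hb hab => by
    simp only [Set.mem_Iic] at ha hb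
    have := h.2 (by simp only [Set.mem_Iic]; omega) (by simp only [Set.mem_Iic]; omega) hab
    omega⟩

theorem snoc (h : IsPath T n w) {a : X} (ha : (w n, a) ∈ T) (hnew : ∀ i ≤ n, w i ≠ a) :
    IsPath T (n + 1) (fun l => if l ≤ n then w l else a) := by
  refine ⟨fun i hi => ?_, fun i hi l hl hil => ?_⟩
  · rcases Nat.lt_or_ge i n with hin | hin
    · simpa [hin.le, Nat.succ_le_of_lt hin] using h.1 i hin
    · simpa [show i = n by omega] using ha
  · simp only [Set.mem_Iic] at hi hl
    by_cases hin : i ≤ n <;> by_cases hln : l ≤ n <;>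
      simp only [hin, hln, if_true, if_false] at hil
    · exact h.2 hin hln hil
    · exact absurd hil (hnew i hin)
    · exact absurd hil.symm (hnew l hln)
    · omega

theorem isSimpleWalk (h : IsPath T n w) (hne : w 0 ≠ w n) :
    IsSimpleWalk T (w 0) (w n) n w :=
  ⟨Nat.one_le_iff_ne_zero.mpr fun hn => hne (hn ▸ rfl), rfl, rfl, h.1,
    fun _ _ hi hj hij => h.2 (Set.mem_Iic.mpr hi.le) (Set.mem_Iic.mpr hj.le) hij⟩

end IsPath

theorem IsSimpleWalk.isPath {T : Set (X × X)} {x y : X} {n : ℕ} {w : ℕ → X}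
    (hxy : x ≠ y) (hw : IsSimpleWalk T x y n w)
    (huniq : ∀ m v, IsSimpleWalk T x y m v → n = m) :
    IsPath T n w := by
  obtain ⟨hn, h0, hend, harc, hinj⟩ := hw
  -- a return to `y` before step `n` would give a shorter simple walk from `x` to `y`
  have hlast : ∀ i < n, w i ≠ w n := by
    intro i hi hiw
    rcases Nat.eq_zero_or_pos i with rfl | hipos
    · exact hxy (h0 ▸ hend ▸ hiw)
    · have := huniq i w ⟨hipos, h0, hiw.trans hend, fun l hl => harc l (hl.trans hi),
        fun a b ha hb => hinj a b (ha.trans hi) (hb.trans hi)⟩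
      omega
  refine ⟨harc, fun i hi l hl hil => ?_⟩
  simp only [Set.mem_Iic] at hi hl
  rcases hi.lt_or_eq with hi | rfl <;> rcases hl.lt_or_eq with hl | rfl
  · exact hinj i l hi hl hil
  · exact absurd hil (hlast i hi)
  · exact absurd hil.symm (hlast l hl)
  · rfl

theorem hasUniquePaths_of_isSimpleWalk {T : Set (X × X)}
    (h : ∀ x y : X, x ≠ y → (∃ n w, IsSimpleWalk T x y n w) ∧ ∀ n w m v,
      IsSimpleWalk T x y n w → IsSimpleWalk T x y m v → n = m ∧ ∀ i ≤ n, w i = v i) :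
    HasUniquePaths T := by
  intro x y
  by_cases hxy : x = y
  · subst hxy
    have hlen : ∀ n w, w 0 = x → w n = x → IsPath T n w → n = 0 := fun n w h0 hn hw =>
      (hw.2 (Set.mem_Iic.mpr (Nat.zero_le n)) (Set.mem_Iic.mpr le_rfl) (h0.trans hn.symm)).symm
    refine ⟨⟨0, fun _ => x, rfl, rfl, IsPath.zero _⟩, fun n w m v hw0 hwn hw hv0 hvm hv => ?_⟩
    obtain rfl := hlen n w hw0 hwn hw
    exact ⟨(hlen m v hv0 hvm hv).symm, fun i hi => by rw [Nat.le_zero.mp hi, hw0, hv0]⟩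
  obtain ⟨⟨n, w, hw⟩, huniq⟩ := h x y hxy
  refine ⟨⟨n, w, hw.2.1, hw.2.2.1, hw.isPath hxy fun m v hv => (huniq n w m v hw hv).1⟩,
    fun n w m v hw0 hwn hw hv0 hvm hv => huniq n w m v ?_ ?_⟩
  · exact hw0 ▸ hwn ▸ hw.isSimpleWalk (hw0 ▸ hwn ▸ hxy)
  · exact hv0 ▸ hvm ▸ hv.isSimpleWalk (hv0 ▸ hvm ▸ hxy)

section Potential

variable {G : Type*} [AddCommGroup G] {T : Set (X × X)}

theorem sum_eq_sub_of_forall_eq_sub {S : Set (X × X)} {g : X → X → G} {ψ : X → G}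
    (hψ : ∀ a b, (a, b) ∈ S → g a b = ψ b - ψ a) {n : ℕ} {w : ℕ → X}
    (hw : ∀ i < n, (w i, w (i + 1)) ∈ S) :
    ∑ i ∈ range n, g (w i) (w (i + 1)) = ψ (w n) - ψ (w 0) := by
  rw [← sum_range_sub (fun i => ψ (w i))]
  exact sum_congr rfl fun i hi => hψ _ _ (hw i (mem_range.mp hi))

/-- Either `a` lies on the path to `b`, which then ends with the arc `a → b`, or the path to `a`
is the path to `b` followed by `b → a`. -/
theorem eq_sub_of_sum_path (hT : HasUniquePaths T) (hloop : ∀ a, (a, a) ∉ T)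
    (hsymm : ∀ a b, (a, b) ∈ T → (b, a) ∈ T) {g : X → X → G}
    (hg : ∀ a b, (a, b) ∈ T → g a b + g b a = 0) {ρ : X} {ψ : X → G}
    (hψ : ∀ n w, w 0 = ρ → IsPath T n w → ψ (w n) = ∑ i ∈ range n, g (w i) (w (i + 1)))
    {a b : X} (hab : (a, b) ∈ T) : g a b = ψ b - ψ a := by
  have hne : a ≠ b := fun h => hloop a (h ▸ hab)
  obtain ⟨n, w, hw0, rfl, hw⟩ := (hT ρ b).1
  by_cases hon : ∃ i ≤ n, w i = a
  · obtain ⟨i, hin, rfl⟩ := hon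
    have hi : i < n := hin.lt_of_ne fun h => hne (h ▸ rfl)
    have hlen : n - i = 1 := ((hT (w i) (w n)).2 (n - i) (fun l => w (i + l)) 1
      (fun l => if l ≤ 0 then w i else w n) (by simp)
      (by simp [Nat.add_sub_cancel' hin])
      (hw.shift hin) (by simp) (by simp)
      ((IsPath.zero fun _ => w i).snoc (by simpa using hab) (by simpa using hne))).1
    rw [hψ n w hw0 hw, hψ i w hw0 (hw.mono hin), show n = i + 1 by omega, sum_range_succ]
    abel
  · push Not at hon
    have hv := hw.snoc (hsymm _ _ hab) hon
    have ha := hψ (n + 1) _ (by simpa using hw0) hv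
    rw [sum_range_succ, ← hψ n _ (by simpa using hw0) (hv.mono n.le_succ)] at ha
    simp only [le_refl, if_true, show ¬ n + 1 ≤ n by omega, if_false] at ha
    rw [ha, ← sub_eq_zero, ← hg _ _ hab]
    abel

theorem exists_eq_sub (hT : HasUniquePaths T) (hloop : ∀ a, (a, a) ∉ T)
    (hsymm : ∀ a b, (a, b) ∈ T → (b, a) ∈ T) {g : X → X → G}
    (hg : ∀ a b, (a, b) ∈ T → g a b + g b a = 0) :
    ∃ ψ : X → G, ∀ a b, (a, b) ∈ T → g a b = ψ b - ψ a := by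
  rcases isEmpty_or_nonempty X with hX | ⟨⟨ρ⟩⟩
  · exact ⟨0, fun a => isEmptyElim a⟩
  choose len path h0 hend hpath using fun x => (hT ρ x).1
  refine ⟨_, fun a b hab => eq_sub_of_sum_path hT hloop hsymm hg (ρ := ρ)
    (ψ := fun x => ∑ i ∈ range (len x), g (path x i) (path x (i + 1)))
    (fun n w hw0 hw => ?_) hab⟩
  obtain ⟨hlen, heq⟩ := (hT ρ (w n)).2 _ _ _ _ (h0 _) (hend _) (hpath _) hw0 rfl hw
  rw [hlen] at heq ⊢
  exact sum_congr rfl fun i hi => by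
    rw [heq i (mem_range.mp hi).le, heq (i + 1) (mem_range.mp hi)]

theorem sum_closedWalk_eq_zero {A : Set (X × X)} (hT : HasUniquePaths T)
    (hloop : ∀ a, (a, a) ∉ T) (hsymm : ∀ a b, (a, b) ∈ T → (b, a) ∈ T) {g : X → X → G}
    (hg : ∀ a b, (a, b) ∈ T → g a b + g b a = 0)
    (hfund : ∀ x y, (x, y) ∈ A → (x, y) ∉ T → ∀ n w, w 0 = y → w n = x → IsPath T n w →
      g x y + ∑ i ∈ range n, g (w i) (w (i + 1)) = 0)
    {n : ℕ} {w : ℕ → X} (hw : ∀ i < n, (w i, w (i + 1)) ∈ A) (hclosed : w n = w 0) :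
    ∑ i ∈ range n, g (w i) (w (i + 1)) = 0 := by
  obtain ⟨ψ, hψ⟩ := exists_eq_sub hT hloop hsymm hg
  have hψA : ∀ a b, (a, b) ∈ A → g a b = ψ b - ψ a := by
    intro a b hab
    by_cases habT : (a, b) ∈ T
    · exact hψ a b habT
    obtain ⟨m, v, hv0, hvm, hv⟩ := (hT b a).1
    have := hfund a b hab habT m v hv0 hvm hv
    rw [sum_eq_sub_of_forall_eq_sub hψ hv.1, hv0, hvm] at this
    rw [← sub_eq_zero, ← this]
    abel
  rw [sum_eq_sub_of_forall_eq_sub hψA hw, hclosed, sub_self]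

end Potential

end ArcSet

theorem Real.sum_log_sub_log_eq_zero_iff {ι : Type*} {s : Finset ι} {f g : ι → ℝ}
    (hf : ∀ i ∈ s, 0 < f i) (hg : ∀ i ∈ s, 0 < g i) :
    ∑ i ∈ s, (Real.log (f i) - Real.log (g i)) = 0 ↔ ∏ i ∈ s, f i = ∏ i ∈ s, g i := by
  rw [sum_sub_distrib, ← Real.log_prod fun i hi => (hf i hi).ne',
    ← Real.log_prod fun i hi => (hg i hi).ne', sub_eq_zero]
  exact Real.log_injOn_pos.eq_iff (prod_pos hf) (prod_pos hg)

namespace JumpIntensity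

open ArcSet Topology

variable {X : Type*}

noncomputable def totalRate (A : Set (X × X)) (k : ℝ → X → X → ℝ) (t : ℝ) (z : X) : ℝ :=
  ∑' w : {w : X // (z, w) ∈ A}, k t z w.1

-- `k'` stands for `∂ₜ k`, so the first term is `∂ₜ log k`.
noncomputable def arcChar (A : Set (X × X)) (k k' : ℝ → X → X → ℝ) (t : ℝ) (z z' : X) : ℝ :=
  k' t z z' / k t z z' + totalRate A k t z' - totalRate A k t z

theorem sum_arcChar_eq_sum_div (A : Set (X × X)) (k k' : ℝ → X → X → ℝ) (t : ℝ) {n : ℕ}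
    {w : ℕ → X} (hclosed : w n = w 0) :
    ∑ i ∈ range n, arcChar A k k' t (w i) (w (i + 1)) =
      ∑ i ∈ range n, k' t (w i) (w (i + 1)) / k t (w i) (w (i + 1)) := by
  simp only [arcChar, add_sub_assoc, sum_add_distrib]
  rw [sum_range_sub (fun i => totalRate A k t (w i)), hclosed, sub_self, add_zero]

theorem hasDerivAt_sum_log_of_closed {A : Set (X × X)} {k k' : ℝ → X → X → ℝ} {t : ℝ}
    {n : ℕ}
    {w : ℕ → X}
    (hk : ∀ i < n, HasDerivAt (fun s => k s (w i) (w (i + 1))) (k' t (w i) (w (i + 1))) t)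
    (hk0 : ∀ i < n, k t (w i) (w (i + 1)) ≠ 0) (hclosed : w n = w 0) :
    HasDerivAt (fun s => ∑ i ∈ range n, Real.log (k s (w i) (w (i + 1))))
      (∑ i ∈ range n, arcChar A k k' t (w i) (w (i + 1))) t := by
  rw [sum_arcChar_eq_sum_div A k k' t hclosed]
  exact HasDerivAt.fun_sum fun i hi =>
    (hk i (mem_range.mp hi)).log (hk0 i (mem_range.mp hi))

section Characteristics

variable {U : Set ℝ} {A : Set (X × X)} {j j' k k' : ℝ → X → X → ℝ}

theorem sum_arcChar_eq_of_prod_eq (hU : IsOpen U)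
    (hjpos : ∀ t ∈ U, ∀ z z' : X, (z, z') ∈ A → 0 < j t z z')
    (hjderiv : ∀ z z' : X, (z, z') ∈ A → ∀ t ∈ U, HasDerivAt (fun s => j s z z') (j' t z z') t)
    (hkpos : ∀ t ∈ U, ∀ z z' : X, (z, z') ∈ A → 0 < k t z z')
    (hkderiv : ∀ z z' : X, (z, z') ∈ A → ∀ t ∈ U, HasDerivAt (fun s => k s z z') (k' t z z') t)
    {n : ℕ} {w : ℕ → X} (hw : ∀ i < n, (w i, w (i + 1)) ∈ A) (hclosed : w n = w 0)
    (hprod : ∀ t ∈ U,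
      ∏ i ∈ range n, k t (w i) (w (i + 1)) = ∏ i ∈ range n, j t (w i) (w (i + 1)))
    {t : ℝ} (ht : t ∈ U) :
    ∑ i ∈ range n, arcChar A k k' t (w i) (w (i + 1)) =
      ∑ i ∈ range n, arcChar A j j' t (w i) (w (i + 1)) := by
  have hlog : (fun s => ∑ i ∈ range n, Real.log (k s (w i) (w (i + 1)))) =ᶠ[𝓝 t]
      fun s => ∑ i ∈ range n, Real.log (j s (w i) (w (i + 1))) := by
    filter_upwards [hU.mem_nhds ht] with s hs
    rw [← Real.log_prod fun i hi => (hkpos s hs _ _ (hw i (mem_range.mp hi))).ne',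
      ← Real.log_prod fun i hi => (hjpos s hs _ _ (hw i (mem_range.mp hi))).ne', hprod s hs]
  refine (hasDerivAt_sum_log_of_closed (fun i hi => hkderiv _ _ (hw i hi) t ht)
    (fun i hi => (hkpos t ht _ _ (hw i hi)).ne') hclosed).unique ?_
  exact (hasDerivAt_sum_log_of_closed (fun i hi => hjderiv _ _ (hw i hi) t ht)
    (fun i hi => (hjpos t ht _ _ (hw i hi)).ne') hclosed).congr_of_eventuallyEq hlog

theorem arcChar_eq_of_cycle (hU : IsOpen U)
    (hjpos : ∀ t ∈ U, ∀ z z' : X, (z, z') ∈ A → 0 < j t z z')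
    (hjderiv : ∀ z z' : X, (z, z') ∈ A → ∀ t ∈ U, HasDerivAt (fun s => j s z z') (j' t z z') t)
    (hkpos : ∀ t ∈ U, ∀ z z' : X, (z, z') ∈ A → 0 < k t z z')
    (hkderiv : ∀ z z' : X, (z, z') ∈ A → ∀ t ∈ U, HasDerivAt (fun s => k s z z') (k' t z z') t)
    {x y : X} (hxy : (x, y) ∈ A) {n : ℕ} {w : ℕ → X} (hw0 : w 0 = y) (hwn : w n = x)
    (hw : ∀ i < n, (w i, w (i + 1)) ∈ A)
    (hprod : ∀ t ∈ U, k t x y * ∏ i ∈ range n, k t (w i) (w (i + 1)) =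
      j t x y * ∏ i ∈ range n, j t (w i) (w (i + 1)))
    {t : ℝ} (ht : t ∈ U)
    (harc : ∀ i < n, arcChar A k k' t (w i) (w (i + 1)) = arcChar A j j' t (w i) (w (i + 1))) :
    arcChar A k k' t x y = arcChar A j j' t x y := by
  have hcycle := sum_arcChar_eq_of_prod_eq hU hjpos hjderiv hkpos hkderiv
    (consWalk_mem (hw0 ▸ hxy) hw) hwn (fun s hs => by
      simp only [prod_range_succ', consWalk, hw0]
      rw [mul_comm, hprod s hs, mul_comm]) ht
  simp only [sum_range_succ', consWalk, hw0] at hcycle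
  rwa [sum_congr rfl fun i hi => harc i (mem_range.mp hi), add_right_inj] at hcycle

end Characteristics

theorem prod_closedWalk_eq {A T : Set (X × X)} (hT : HasUniquePaths T)
    (hloop : ∀ z, (z, z) ∉ A) (hTA : T ⊆ A) (hTsymm : ∀ z z', (z, z') ∈ T → (z', z) ∈ T)
    {j k : X → X → ℝ} (hjpos : ∀ z z', (z, z') ∈ A → 0 < j z z')
    (hkpos : ∀ z z', (z, z') ∈ A → 0 < k z z')
    (hedge : ∀ z z', (z, z') ∈ T → k z z' * k z' z = j z z' * j z' z)
    (hfund : ∀ x y, (x, y) ∈ A → (x, y) ∉ T → ∀ n w, IsSimpleWalk T y x n w →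
      k x y * ∏ i ∈ range n, k (w i) (w (i + 1)) = j x y * ∏ i ∈ range n, j (w i) (w (i + 1)))
    {n : ℕ} {w : ℕ → X} (hw : ∀ i < n, (w i, w (i + 1)) ∈ A) (hclosed : w n = w 0) :
    ∏ i ∈ range n, k (w i) (w (i + 1)) = ∏ i ∈ range n, j (w i) (w (i + 1)) := by
  have hlog : ∀ {m : ℕ} {v : ℕ → X}, (∀ i < m, (v i, v (i + 1)) ∈ A) →
      (∑ i ∈ range m, (Real.log (k (v i) (v (i + 1))) - Real.log (j (v i) (v (i + 1)))) = 0 ↔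
        ∏ i ∈ range m, k (v i) (v (i + 1)) = ∏ i ∈ range m, j (v i) (v (i + 1))) :=
    fun hv => Real.sum_log_sub_log_eq_zero_iff (fun i hi => hkpos _ _ (hv i (mem_range.mp hi)))
      (fun i hi => hjpos _ _ (hv i (mem_range.mp hi)))
  refine (hlog hw).mp (sum_closedWalk_eq_zero (A := A) hT (fun z hz => hloop z (hTA hz)) hTsymm
    (g := fun a b => Real.log (k a b) - Real.log (j a b)) (fun a b hab => ?_)
    (fun x y hxy hxT m v hv0 hvm hv => ?_) hw hclosed)
  · have := (hlog (m := 2) (v := fun i => if i = 1 then b else a) fun i hi => by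
      interval_cases i
      exacts [by simpa using hTA hab, by simpa using hTA (hTsymm _ _ hab)]).mpr
    simp [sum_range_succ, prod_range_succ, hedge a b hab] at this
    linarith
  · subst hv0 hvm
    have := (hlog (consWalk_mem hxy fun i hi => hTA (hv.1 i hi))).mpr (by
      simp only [prod_range_succ', consWalk]
      rw [mul_comm, hfund _ _ hxy hxT m v (hv.isSimpleWalk fun h => hloop _ (h ▸ hxy)), mul_comm])
    simp only [sum_range_succ', consWalk] at this
    rwa [add_comm] at this

end JumpIntensity

theorem stmt8_general {X : Type*} (A T : Set (X × X))
    (hnoloop : ∀ z : X, (z, z) ∉ A)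
    (hTA : T ⊆ A)
    (hTsymm : ∀ z z' : X, (z, z') ∈ T → (z', z) ∈ T)
    (hTtree : ∀ x y : X, x ≠ y →
      (∃ (n : ℕ) (w : ℕ → X), 1 ≤ n ∧ w 0 = x ∧ w n = y ∧
        (∀ i < n, (w i, w (i + 1)) ∈ T) ∧
        (∀ i j, i < n → j < n → w i = w j → i = j)) ∧
      (∀ (n : ℕ) (w : ℕ → X) (m : ℕ) (v : ℕ → X),
        (1 ≤ n ∧ w 0 = x ∧ w n = y ∧ (∀ i < n, (w i, w (i + 1)) ∈ T) ∧
          (∀ i j, i < n → j < n → w i = w j → i = j)) →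
        (1 ≤ m ∧ v 0 = x ∧ v m = y ∧ (∀ i < m, (v i, v (i + 1)) ∈ T) ∧
          (∀ i j, i < m → j < m → v i = v j → i = j)) →
        n = m ∧ ∀ i ≤ n, w i = v i))
    (j j' k k' : ℝ → X → X → ℝ)
    (hjpos : ∀ t ∈ Set.Ioo (0 : ℝ) 1, ∀ z z' : X, (z, z') ∈ A → 0 < j t z z')
    (hjderiv : ∀ z z' : X, (z, z') ∈ A → ∀ t ∈ Set.Ioo (0 : ℝ) 1,
      HasDerivAt (fun s => j s z z') (j' t z z') t)
    (hkpos : ∀ t ∈ Set.Ioo (0 : ℝ) 1, ∀ z z' : X, (z, z') ∈ A → 0 < k t z z')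
    (hkderiv : ∀ z z' : X, (z, z') ∈ A → ∀ t ∈ Set.Ioo (0 : ℝ) 1,
      HasDerivAt (fun s => k s z z') (k' t z z') t)
    -- (i) equality of the arc characteristics on the tree arcs
    (harc : ∀ t ∈ Set.Ioo (0 : ℝ) 1, ∀ z z' : X, (z, z') ∈ T →
      k' t z z' / k t z z'
          + (∑' w : {w : X // (z', w) ∈ A}, k t z' w.1)
          - (∑' w : {w : X // (z, w) ∈ A}, k t z w.1) =
        j' t z z' / j t z z'
          + (∑' w : {w : X // (z', w) ∈ A}, j t z' w.1)
          - (∑' w : {w : X // (z, w) ∈ A}, j t z w.1))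
    -- (ii) equality of the closed-walk characteristics on the closed walks of length two
    (hedge : ∀ t ∈ Set.Ioo (0 : ℝ) 1, ∀ z z' : X, (z, z') ∈ A →
      k t z z' * k t z' z = j t z z' * j t z' z)
    -- (iii) equality of the closed-walk characteristics on the fundamental closed walks
    (hfund : ∀ t ∈ Set.Ioo (0 : ℝ) 1, ∀ x y : X, (x, y) ∈ A → (x, y) ∉ T →
      ∀ (n : ℕ) (w : ℕ → X), 1 ≤ n → w 0 = y → w n = x →
        (∀ i < n, (w i, w (i + 1)) ∈ T) →
        (∀ i j, i < n → j < n → w i = w j → i = j) →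
        k t x y * ∏ i ∈ Finset.range n, k t (w i) (w (i + 1)) =
          j t x y * ∏ i ∈ Finset.range n, j t (w i) (w (i + 1))) :
    -- the arc characteristics agree on all arcs …
    (∀ t ∈ Set.Ioo (0 : ℝ) 1, ∀ z z' : X, (z, z') ∈ A →
      k' t z z' / k t z z'
          + (∑' w : {w : X // (z', w) ∈ A}, k t z' w.1)
          - (∑' w : {w : X // (z, w) ∈ A}, k t z w.1) =
        j' t z z' / j t z z'
          + (∑' w : {w : X // (z', w) ∈ A}, j t z' w.1)
          - (∑' w : {w : X // (z, w) ∈ A}, j t z w.1)) ∧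
    -- … and the closed-walk characteristics agree on all closed walks
    (∀ t ∈ Set.Ioo (0 : ℝ) 1, ∀ (n : ℕ) (w : ℕ → X), 1 ≤ n →
      (∀ i < n, (w i, w (i + 1)) ∈ A) → w n = w 0 →
      ∏ i ∈ Finset.range n, k t (w i) (w (i + 1)) =
        ∏ i ∈ Finset.range n, j t (w i) (w (i + 1))) := by
  have hT : ArcSet.HasUniquePaths T := ArcSet.hasUniquePaths_of_isSimpleWalk hTtree
  refine ⟨fun t ht z z' hA => ?_, fun t ht n w _ hw hclosed => ?_⟩
  · by_cases hzT : (z, z') ∈ T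
    · exact harc t ht z z' hzT
    obtain ⟨n, w, hn, hw0, hwn, hwT, hinj⟩ := (hTtree z' z fun h => hnoloop z (h ▸ hA)).1
    exact JumpIntensity.arcChar_eq_of_cycle isOpen_Ioo hjpos hjderiv hkpos hkderiv hA hw0 hwn
      (fun i hi => hTA (hwT i hi)) (fun s hs => hfund s hs z z' hA hzT n w hn hw0 hwn hwT hinj)
      ht fun i hi => harc t ht _ _ (hwT i hi)
  · exact JumpIntensity.prod_closedWalk_eq hT hnoloop hTA hTsymm (hjpos t ht) (hkpos t ht)
      (fun z z' h => hedge t ht z z' (hTA h))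
      (fun x y hA hxT m v ⟨h1, h0, hm, hvT, hinj⟩ => hfund t ht x y hA hxT m v h1 h0 hm hvT hinj)
      hw hclosed

/-- Let `(𝒳, 𝒜)` be a symmetric, connected, locally finite directed graph
(without loops), `𝒯 ⊆ 𝒜` a spanning tree (encoded through the equivalent characterization:
between any two distinct vertices there is a unique simple directed `𝒯`-walk), and let `j`, `k`
be positive, continuously `t`-differentiable jump intensities (with derivative data `j'`, `k'`).
If the arc characteristics of `j` and `k` agree on the tree arcs, and their closed-walk
characteristics agree on every closed walk of length two and on every fundamental closed walk
(a non-tree arc concatenated with the unique simple `𝒯`-walk back), then the arc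
characteristics agree on *all* arcs and the closed-walk characteristics agree on *all* closed
walks, for all `t ∈ (0,1)`. -/
theorem stmt8 {X : Type*} [Countable X] (A T : Set (X × X))
    (hsymm : ∀ z z' : X, (z, z') ∈ A → (z', z) ∈ A)
    (hnoloop : ∀ z : X, (z, z) ∉ A)
    (hconn : ∀ x y : X, ∃ (n : ℕ) (w : ℕ → X),
      w 0 = x ∧ w n = y ∧ ∀ i < n, (w i, w (i + 1)) ∈ A)
    (hfin : ∀ z : X, {z' : X | (z, z') ∈ A}.Finite)
    (hTA : T ⊆ A)
    (hTsymm : ∀ z z' : X, (z, z') ∈ T → (z', z) ∈ T)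
    (hTtree : ∀ x y : X, x ≠ y →
      (∃ (n : ℕ) (w : ℕ → X), 1 ≤ n ∧ w 0 = x ∧ w n = y ∧
        (∀ i < n, (w i, w (i + 1)) ∈ T) ∧
        (∀ i j, i < n → j < n → w i = w j → i = j)) ∧
      (∀ (n : ℕ) (w : ℕ → X) (m : ℕ) (v : ℕ → X),
        (1 ≤ n ∧ w 0 = x ∧ w n = y ∧ (∀ i < n, (w i, w (i + 1)) ∈ T) ∧
          (∀ i j, i < n → j < n → w i = w j → i = j)) →
        (1 ≤ m ∧ v 0 = x ∧ v m = y ∧ (∀ i < m, (v i, v (i + 1)) ∈ T) ∧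
          (∀ i j, i < m → j < m → v i = v j → i = j)) →
        n = m ∧ ∀ i ≤ n, w i = v i))
    (j j' k k' : ℝ → X → X → ℝ)
    (hjpos : ∀ t ∈ Set.Ioo (0 : ℝ) 1, ∀ z z' : X, (z, z') ∈ A → 0 < j t z z')
    (hjderiv : ∀ z z' : X, (z, z') ∈ A → ∀ t ∈ Set.Ioo (0 : ℝ) 1,
      HasDerivAt (fun s => j s z z') (j' t z z') t)
    (hjcont : ∀ z z' : X, (z, z') ∈ A →
      ContinuousOn (fun t => j' t z z') (Set.Ioo 0 1))
    (hkpos : ∀ t ∈ Set.Ioo (0 : ℝ) 1, ∀ z z' : X, (z, z') ∈ A → 0 < k t z z')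
    (hkderiv : ∀ z z' : X, (z, z') ∈ A → ∀ t ∈ Set.Ioo (0 : ℝ) 1,
      HasDerivAt (fun s => k s z z') (k' t z z') t)
    (hkcont : ∀ z z' : X, (z, z') ∈ A →
      ContinuousOn (fun t => k' t z z') (Set.Ioo 0 1))
    -- (i) equality of the arc characteristics on the tree arcs
    (harc : ∀ t ∈ Set.Ioo (0 : ℝ) 1, ∀ z z' : X, (z, z') ∈ T →
      k' t z z' / k t z z'
          + (∑' w : {w : X // (z', w) ∈ A}, k t z' w.1)
          - (∑' w : {w : X // (z, w) ∈ A}, k t z w.1) =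
        j' t z z' / j t z z'
          + (∑' w : {w : X // (z', w) ∈ A}, j t z' w.1)
          - (∑' w : {w : X // (z, w) ∈ A}, j t z w.1))
    -- (ii) equality of the closed-walk characteristics on the closed walks of length two
    (hedge : ∀ t ∈ Set.Ioo (0 : ℝ) 1, ∀ z z' : X, (z, z') ∈ A →
      k t z z' * k t z' z = j t z z' * j t z' z)
    -- (iii) equality of the closed-walk characteristics on the fundamental closed walks
    (hfund : ∀ t ∈ Set.Ioo (0 : ℝ) 1, ∀ x y : X, (x, y) ∈ A → (x, y) ∉ T →
      ∀ (n : ℕ) (w : ℕ → X), 1 ≤ n → w 0 = y → w n = x →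
        (∀ i < n, (w i, w (i + 1)) ∈ T) →
        (∀ i j, i < n → j < n → w i = w j → i = j) →
        k t x y * ∏ i ∈ Finset.range n, k t (w i) (w (i + 1)) =
          j t x y * ∏ i ∈ Finset.range n, j t (w i) (w (i + 1))) :
    -- the arc characteristics agree on all arcs …
    (∀ t ∈ Set.Ioo (0 : ℝ) 1, ∀ z z' : X, (z, z') ∈ A →
      k' t z z' / k t z z'
          + (∑' w : {w : X // (z', w) ∈ A}, k t z' w.1)
          - (∑' w : {w : X // (z, w) ∈ A}, k t z w.1) =
        j' t z z' / j t z z'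
          + (∑' w : {w : X // (z', w) ∈ A}, j t z' w.1)
          - (∑' w : {w : X // (z, w) ∈ A}, j t z w.1)) ∧
    -- … and the closed-walk characteristics agree on all closed walks
    (∀ t ∈ Set.Ioo (0 : ℝ) 1, ∀ (n : ℕ) (w : ℕ → X), 1 ≤ n →
      (∀ i < n, (w i, w (i + 1)) ∈ A) → w n = w 0 →
      ∏ i ∈ Finset.range n, k t (w i) (w (i + 1)) =
        ∏ i ∈ Finset.range n, j t (w i) (w (i + 1))) :=
  stmt8_general A T hnoloop hTA hTsymm hTtree j j' k k' hjpos hjderiv hkpos hkderiv harc hedge hfund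
end

section
/- Let (𝒳,𝒜) be a symmetric, connected, locally finite directed graph and let j, k : (0,1)×𝒜 → (0,∞) be jump intensities such that for every t ∈ (0,1) and every closed walk c one has χ_c[k](t,c) = χ_c[j](t,c). Then there exists φ : (0,1)×𝒳 → ℝ such that t ↦ φ_t(z) is continuously differentiable for every z ∈ 𝒳 and k(t,z→z') = exp(φ_t(z') − φ_t(z))·j(t,z→z') for every t ∈ (0,1) and every arc (z→z') ∈ 𝒜. -/
/-!
Put `ψ_t(z, z') = log k(t, z→z') - log j(t, z→z')`. Equality of the closed-walk characteristics
says that `ψ_t` sums to zero along every closed walk, so its sum along a walk from a base point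
`x₀` to `z` defines a potential `φ_t(z)`: for an arc `z → z'`, closing both `x₀ ⇝ z → z'` and
`x₀ ⇝ z'` with one and the same walk `z' ⇝ x₀` shows `ψ_t(z, z') = φ_t(z') - φ_t(z)`. Each
`φ_t(z)` is a finite sum of functions `log k - log j`, hence `C¹` in `t`.
-/

open Finset

section ArcWalks

variable {X : Type*}

def IsArcWalk (A : Set (X × X)) (w : ℕ → X) (n : ℕ) (x y : X) : Prop :=
  w 0 = x ∧ w n = y ∧ ∀ i < n, (w i, w (i + 1)) ∈ A

def walkSum {G : Type*} [AddCommMonoid G] (ψ : X → X → G) (w : ℕ → X) (n : ℕ) : G :=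
  ∑ i ∈ range n, ψ (w i) (w (i + 1))

def walkAppend (u v : ℕ → X) (m : ℕ) : ℕ → X :=
  fun i => if i ≤ m then u i else v (i - m)

def arcWalk (x y : X) : ℕ → X :=
  fun i => if i = 0 then x else y

section Walks

variable {A : Set (X × X)} {u v : ℕ → X} {m n : ℕ} {x y z : X}

theorem walkAppend_of_le {i : ℕ} (hi : i ≤ m) : walkAppend u v m i = u i := if_pos hi

theorem walkAppend_add (huv : u m = v 0) (i : ℕ) : walkAppend u v m (m + i) = v i := by
  rcases Nat.eq_zero_or_pos i with rfl | hi
  · simpa [walkAppend] using huv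
  · simp [walkAppend, Nat.not_le.mpr (Nat.lt_add_of_pos_right hi)]

theorem walkSum_walkAppend {G : Type*} [AddCommMonoid G] (ψ : X → X → G) (huv : u m = v 0) :
    walkSum ψ (walkAppend u v m) (m + n) = walkSum ψ u m + walkSum ψ v n := by
  unfold walkSum
  rw [sum_range_add]
  congr 1
  · refine sum_congr rfl fun i hi => ?_
    have hi := mem_range.mp hi
    rw [walkAppend_of_le hi.le, walkAppend_of_le hi]
  · refine sum_congr rfl fun i _ => ?_
    rw [walkAppend_add huv, add_assoc, walkAppend_add huv]

theorem IsArcWalk.append (hu : IsArcWalk A u m x y) (hv : IsArcWalk A v n y z) :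
    IsArcWalk A (walkAppend u v m) (m + n) x z := by
  obtain ⟨hu0, hum, hu⟩ := hu
  obtain ⟨hv0, hvn, hv⟩ := hv
  have huv : u m = v 0 := hum.trans hv0.symm
  refine ⟨(walkAppend_of_le m.zero_le).trans hu0, (walkAppend_add huv n).trans hvn, ?_⟩
  intro i hi
  rcases Nat.lt_or_ge i m with him | him
  · rw [walkAppend_of_le him.le, walkAppend_of_le him]
    exact hu i him
  · obtain ⟨i, rfl⟩ := Nat.exists_eq_add_of_le him
    rw [walkAppend_add huv, add_assoc, walkAppend_add huv]
    exact hv i (by omega)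

theorem isArcWalk_arcWalk (h : (x, y) ∈ A) : IsArcWalk A (arcWalk x y) 1 x y :=
  ⟨rfl, rfl, fun i hi => by simpa [arcWalk, Nat.lt_one_iff.mp hi] using h⟩

theorem walkSum_arcWalk {G : Type*} [AddCommMonoid G] (ψ : X → X → G) :
    walkSum ψ (arcWalk x y) 1 = ψ x y := by
  simp [walkSum, arcWalk]

theorem eq_walkSum_sub_walkSum {G : Type*} [AddCommGroup G] {ψ : X → X → G}
    (hψ : ∀ w n x, IsArcWalk A w n x x → walkSum ψ w n = 0)
    {x₀ z z' : X} {u u' v : ℕ → X} {m m' n : ℕ} (hu : IsArcWalk A u m x₀ z)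
    (hu' : IsArcWalk A u' m' x₀ z') (hv : IsArcWalk A v n z' x₀) (hzz' : (z, z') ∈ A) :
    ψ z z' = walkSum ψ u' m' - walkSum ψ u m := by
  have hstep := (isArcWalk_arcWalk hzz').append hv
  have hloop := hψ _ _ _ (hu.append hstep)
  have hloop' := hψ _ _ _ (hu'.append hv)
  rw [walkSum_walkAppend ψ (hu.2.1.trans hstep.1.symm), walkSum_walkAppend ψ hv.1.symm,
    walkSum_arcWalk] at hloop
  rw [walkSum_walkAppend ψ (hu'.2.1.trans hv.1.symm)] at hloop'
  linear_combination (norm := abel) hloop - hloop'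

theorem walkSum_log_sub_log_eq_zero {j k : X → X → ℝ} (hj : ∀ a b, (a, b) ∈ A → 0 < j a b)
    (hk : ∀ a b, (a, b) ∈ A → 0 < k a b)
    (hclosed : ∀ (n : ℕ) (w : ℕ → X), 1 ≤ n → (∀ i < n, (w i, w (i + 1)) ∈ A) → w n = w 0 →
      ∏ i ∈ range n, k (w i) (w (i + 1)) = ∏ i ∈ range n, j (w i) (w (i + 1)))
    (w : ℕ → X) (n : ℕ) (x : X) (hw : IsArcWalk A w n x x) :
    walkSum (fun a b => Real.log (k a b) - Real.log (j a b)) w n = 0 := by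
  obtain ⟨hw0, hwn, hw⟩ := hw
  rcases Nat.eq_zero_or_pos n with rfl | hn
  · simp [walkSum]
  have hlog (f : X → X → ℝ) (hf : ∀ a b, (a, b) ∈ A → 0 < f a b) :
      ∑ i ∈ range n, Real.log (f (w i) (w (i + 1))) =
        Real.log (∏ i ∈ range n, f (w i) (w (i + 1))) :=
    (Real.log_prod fun i hi => (hf _ _ (hw i (mem_range.mp hi))).ne').symm
  rw [walkSum, sum_sub_distrib, hlog k hk, hlog j hj, hclosed n w hn hw (hwn.trans hw0.symm),
    sub_self]

end Walks

section Derivatives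

variable {ψ ψ' : ℝ → X → X → ℝ} {w : ℕ → X} {n : ℕ}

theorem hasDerivAt_walkSum {t : ℝ}
    (h : ∀ i < n, HasDerivAt (fun s => ψ s (w i) (w (i + 1))) (ψ' t (w i) (w (i + 1))) t) :
    HasDerivAt (fun s => walkSum (ψ s) w n) (walkSum (ψ' t) w n) t :=
  HasDerivAt.fun_sum fun i hi => h i (mem_range.mp hi)

theorem continuousOn_walkSum {s : Set ℝ}
    (h : ∀ i < n, ContinuousOn (fun t => ψ t (w i) (w (i + 1))) s) :
    ContinuousOn (fun t => walkSum (ψ t) w n) s :=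
  continuousOn_finsetSum _ fun i hi => h i (mem_range.mp hi)

theorem continuousOn_div_of_hasDerivAt {f f' : ℝ → ℝ} {s : Set ℝ}
    (hf : ∀ t ∈ s, HasDerivAt f (f' t) t) (hf' : ContinuousOn f' s) (hf0 : ∀ t ∈ s, f t ≠ 0) :
    ContinuousOn (fun t => f' t / f t) s :=
  hf'.div (fun t ht => (hf t ht).continuousAt.continuousWithinAt) hf0

end Derivatives

end ArcWalks

theorem stmt9_general {X : Type*} (A : Set (X × X))
    (hconn : ∀ x y : X, ∃ (n : ℕ) (w : ℕ → X),
      w 0 = x ∧ w n = y ∧ ∀ i < n, (w i, w (i + 1)) ∈ A)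
    (j j' k k' : ℝ → X → X → ℝ)
    (hjpos : ∀ t ∈ Set.Ioo (0 : ℝ) 1, ∀ z z' : X, (z, z') ∈ A → 0 < j t z z')
    (hjderiv : ∀ z z' : X, (z, z') ∈ A → ∀ t ∈ Set.Ioo (0 : ℝ) 1,
      HasDerivAt (fun s => j s z z') (j' t z z') t)
    (hjcont : ∀ z z' : X, (z, z') ∈ A →
      ContinuousOn (fun t => j' t z z') (Set.Ioo 0 1))
    (hkpos : ∀ t ∈ Set.Ioo (0 : ℝ) 1, ∀ z z' : X, (z, z') ∈ A → 0 < k t z z')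
    (hkderiv : ∀ z z' : X, (z, z') ∈ A → ∀ t ∈ Set.Ioo (0 : ℝ) 1,
      HasDerivAt (fun s => k s z z') (k' t z z') t)
    (hkcont : ∀ z z' : X, (z, z') ∈ A →
      ContinuousOn (fun t => k' t z z') (Set.Ioo 0 1))
    (hclosed : ∀ t ∈ Set.Ioo (0 : ℝ) 1, ∀ (n : ℕ) (w : ℕ → X), 1 ≤ n →
      (∀ i < n, (w i, w (i + 1)) ∈ A) → w n = w 0 →
      ∏ i ∈ Finset.range n, k t (w i) (w (i + 1)) =
        ∏ i ∈ Finset.range n, j t (w i) (w (i + 1))) :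
    ∃ φ φ' : ℝ → X → ℝ,
      (∀ z : X, (∀ t ∈ Set.Ioo (0 : ℝ) 1, HasDerivAt (fun s => φ s z) (φ' t z) t) ∧
        ContinuousOn (fun t => φ' t z) (Set.Ioo 0 1)) ∧
      (∀ t ∈ Set.Ioo (0 : ℝ) 1, ∀ z z' : X, (z, z') ∈ A →
        k t z z' = Real.exp (φ t z' - φ t z) * j t z z') := by
  rcases isEmpty_or_nonempty X with _ | ⟨⟨x₀⟩⟩
  · exact ⟨0, 0, fun z => isEmptyElim z, fun _ _ z => isEmptyElim z⟩
  choose m u hu using fun z => hconn x₀ z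
  choose n v hv using fun z => hconn z x₀
  set ψ : ℝ → X → X → ℝ := fun t a b => Real.log (k t a b) - Real.log (j t a b)
  set ψ' : ℝ → X → X → ℝ := fun t a b => k' t a b / k t a b - j' t a b / j t a b
  have hψ : ∀ a b, (a, b) ∈ A → ∀ t ∈ Set.Ioo (0 : ℝ) 1,
      HasDerivAt (fun s => ψ s a b) (ψ' t a b) t := fun a b hab t ht =>
    ((hkderiv a b hab t ht).log (hkpos t ht a b hab).ne').sub
      ((hjderiv a b hab t ht).log (hjpos t ht a b hab).ne')
  have hψ' : ∀ a b, (a, b) ∈ A → ContinuousOn (fun t => ψ' t a b) (Set.Ioo 0 1) :=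
    fun a b hab =>
      (continuousOn_div_of_hasDerivAt (hkderiv a b hab) (hkcont a b hab)
        fun t ht => (hkpos t ht a b hab).ne').sub
      (continuousOn_div_of_hasDerivAt (hjderiv a b hab) (hjcont a b hab)
        fun t ht => (hjpos t ht a b hab).ne')
  refine ⟨fun t z => walkSum (ψ t) (u z) (m z), fun t z => walkSum (ψ' t) (u z) (m z),
    fun z => ⟨fun t ht => hasDerivAt_walkSum fun i hi => hψ _ _ ((hu z).2.2 i hi) t ht,
      continuousOn_walkSum fun i hi => hψ' _ _ ((hu z).2.2 i hi)⟩, ?_⟩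
  intro t ht z z' hzz'
  have hclosedψ := walkSum_log_sub_log_eq_zero (hjpos t ht) (hkpos t ht) (hclosed t ht)
  rw [← eq_walkSum_sub_walkSum hclosedψ (hu z) (hu z') (hv z') hzz', Real.exp_sub,
    Real.exp_log (hkpos t ht z z' hzz'), Real.exp_log (hjpos t ht z z' hzz'),
    div_mul_cancel₀ _ (hjpos t ht z z' hzz').ne']

/-- Let `(𝒳, 𝒜)` be a symmetric, connected, locally finite directed graph
(without loops), and let `j`, `k` be positive, continuously `t`-differentiable jump intensities
(with derivative data `j'`, `k'`) whose closed-walk characteristics coincide for every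
`t ∈ (0,1)` and every closed walk.  Then there exists a potential `φ : (0,1) × 𝒳 → ℝ`,
continuously differentiable in time, such that
`k(t, z→z') = exp(φ_t(z') − φ_t(z)) · j(t, z→z')` on every arc. -/
theorem stmt9 {X : Type*} [Countable X] (A : Set (X × X))
    (hsymm : ∀ z z' : X, (z, z') ∈ A → (z', z) ∈ A)
    (hnoloop : ∀ z : X, (z, z) ∉ A)
    (hconn : ∀ x y : X, ∃ (n : ℕ) (w : ℕ → X),
      w 0 = x ∧ w n = y ∧ ∀ i < n, (w i, w (i + 1)) ∈ A)
    (hfin : ∀ z : X, {z' : X | (z, z') ∈ A}.Finite)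
    (j j' k k' : ℝ → X → X → ℝ)
    (hjpos : ∀ t ∈ Set.Ioo (0 : ℝ) 1, ∀ z z' : X, (z, z') ∈ A → 0 < j t z z')
    (hjderiv : ∀ z z' : X, (z, z') ∈ A → ∀ t ∈ Set.Ioo (0 : ℝ) 1,
      HasDerivAt (fun s => j s z z') (j' t z z') t)
    (hjcont : ∀ z z' : X, (z, z') ∈ A →
      ContinuousOn (fun t => j' t z z') (Set.Ioo 0 1))
    (hkpos : ∀ t ∈ Set.Ioo (0 : ℝ) 1, ∀ z z' : X, (z, z') ∈ A → 0 < k t z z')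
    (hkderiv : ∀ z z' : X, (z, z') ∈ A → ∀ t ∈ Set.Ioo (0 : ℝ) 1,
      HasDerivAt (fun s => k s z z') (k' t z z') t)
    (hkcont : ∀ z z' : X, (z, z') ∈ A →
      ContinuousOn (fun t => k' t z z') (Set.Ioo 0 1))
    (hclosed : ∀ t ∈ Set.Ioo (0 : ℝ) 1, ∀ (n : ℕ) (w : ℕ → X), 1 ≤ n →
      (∀ i < n, (w i, w (i + 1)) ∈ A) → w n = w 0 →
      ∏ i ∈ Finset.range n, k t (w i) (w (i + 1)) =
        ∏ i ∈ Finset.range n, j t (w i) (w (i + 1))) :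
    ∃ φ φ' : ℝ → X → ℝ,
      (∀ z : X, (∀ t ∈ Set.Ioo (0 : ℝ) 1, HasDerivAt (fun s => φ s z) (φ' t z) t) ∧
        ContinuousOn (fun t => φ' t z) (Set.Ioo 0 1)) ∧
      (∀ t ∈ Set.Ioo (0 : ℝ) 1, ∀ z z' : X, (z, z') ∈ A →
        k t z z' = Real.exp (φ t z' - φ t z) * j t z z') :=
  stmt9_general A hconn j j' k k' hjpos hjderiv hjcont hkpos hkderiv hkcont hclosed
end

section
/- Let d ≥ 1 and fix y ∈ (ℤ/2ℤ)^d. For t ∈ [0,1) and z ∈ (ℤ/2ℤ)^d define ψ_t(z) := ∑_{i=1}^d log(1 + (−1)^{z_i + y_i}·e^{−2(1−t)}), where z_i, y_i ∈ {0,1} are the coordinates and z^i := z + g_i denotes z with its i-th coordinate flipped. Then: (i) for every z, t ↦ ψ_t(z) is differentiable on [0,1) and ∂_t ψ_t(z) + ∑_{i=1}^d (exp(ψ_t(z^i) − ψ_t(z)) − 1) = 0; (ii) for every t ∈ [0,1), every z and every i, exp(ψ_t(z^i) − ψ_t(z)) = tanh(1−t) if z_i = y_i and exp(ψ_t(z^i)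 − ψ_t(z)) = coth(1−t) if z_i ≠ y_i. -/
/-!
Write `q = e^{-2(1-t)} ∈ (0,1)` and `sᵢ = ±1` for the sign `(−1)^{zᵢ + yᵢ}`. Flipping the `i`-th
coordinate only changes the `i`-th summand of `ψ_t(z)`, and flips `sᵢ`, so
`exp(ψ_t(zⁱ) − ψ_t(z)) = (1 − sᵢ q)/(1 + sᵢ q)`, which is `tanh(1−t)` or `coth(1−t)` according to
`sᵢ`. Since `∂_t log(1 + sᵢ q) = 2 sᵢ q/(1 + sᵢ q)` and `(1 − sᵢ q)/(1 + sᵢ q) − 1 = −2 sᵢ q/(1 + sᵢ q)`,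
the HJB equation holds coordinate by coordinate.
-/

/-- The potential `ψ_t(z) = ∑ᵢ log(1 + (−1)^{zᵢ + yᵢ} e^{−2(1−t)})` on the hypercube
`(ℤ/2ℤ)^d`, where `(−1)^{zᵢ + yᵢ} = 1` iff `zᵢ = yᵢ`. -/
noncomputable def hyperPsi (d : ℕ) (y : Fin d → ZMod 2) (t : ℝ) (z : Fin d → ZMod 2) : ℝ :=
  ∑ i : Fin d,
    Real.log (1 + (if z i = y i then (1 : ℝ) else -1) * Real.exp (-2 * (1 - t)))

open Real

lemma Fintype.sum_add_single_sub_sum {ι M G : Type*} [Fintype ι] [DecidableEq ι]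
    [AddZeroClass M] [AddCommGroup G] (f : ι → M → G) (z : ι → M) (i : ι) (c : M) :
    ∑ j, f j ((z + Pi.single i c : ι → M) j) - ∑ j, f j (z j) = f i (z i + c) - f i (z i) := by
  rw [← Finset.sum_sub_distrib, Finset.sum_eq_single i]
  · simp
  · intro j _ hj
    simp [Pi.single_eq_of_ne hj]
  · simp

lemma ZMod.two_ite_add_one_eq {R : Type*} [Ring R] (a b : ZMod 2) :
    (if a + 1 = b then (1 : R) else -1) = -(if a = b then 1 else -1) := by
  have h : a + 1 = b ↔ a ≠ b := by revert a b; decide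
  by_cases hab : a = b <;> simp [h, hab]

lemma one_add_mul_pos_of_abs_le_of_abs_lt {s q : ℝ} (hs : |s| ≤ 1) (hq : |q| < 1) :
    0 < 1 + s * q := by
  have : |s * q| < 1 := by
    rw [abs_mul]
    exact lt_of_le_of_lt (mul_le_of_le_one_left (abs_nonneg q) hs) hq
  linarith [neg_abs_le (s * q)]

lemma abs_exp_neg_two_mul_lt_one {u : ℝ} (hu : 0 < u) : |exp (-2 * u)| < 1 := by
  rw [abs_of_pos (exp_pos _)]
  exact exp_lt_one_iff.mpr (by linarith)

lemma sinh_eq_exp_mul (u : ℝ) : sinh u = exp u * (1 - exp (-2 * u)) / 2 := by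
  rw [sinh_eq, mul_sub, mul_one, ← exp_add]
  ring_nf

lemma cosh_eq_exp_mul (u : ℝ) : cosh u = exp u * (1 + exp (-2 * u)) / 2 := by
  rw [cosh_eq, mul_add, mul_one, ← exp_add]
  ring_nf

lemma tanh_eq_one_sub_div_one_add (u : ℝ) :
    tanh u = (1 - exp (-2 * u)) / (1 + exp (-2 * u)) := by
  rw [tanh_eq_sinh_div_cosh, sinh_eq_exp_mul, cosh_eq_exp_mul]
  field_simp

lemma cosh_div_sinh_eq_one_add_div_one_sub (u : ℝ) :
    cosh u / sinh u = (1 + exp (-2 * u)) / (1 - exp (-2 * u)) := by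
  rw [sinh_eq_exp_mul, cosh_eq_exp_mul]
  field_simp

lemma hasDerivAt_log_one_add_mul_exp {s t : ℝ} (h : 1 + s * exp (-2 * (1 - t)) ≠ 0) :
    HasDerivAt (fun r => log (1 + s * exp (-2 * (1 - r))))
      (2 * (s * exp (-2 * (1 - t))) / (1 + s * exp (-2 * (1 - t)))) t := by
  have hlin : HasDerivAt (fun r : ℝ => -2 * (1 - r)) 2 t := by
    simpa using ((hasDerivAt_id t).const_sub 1).const_mul (-2 : ℝ)
  convert ((hlin.exp.const_mul s).const_add 1).log h using 1
  ring

lemma div_add_one_sub_div_sub_one_eq_zero {a : ℝ} (h : 1 + a ≠ 0) :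
    2 * a / (1 + a) + ((1 - a) / (1 + a) - 1) = 0 := by
  field_simp
  ring

section hypercube

variable {d : ℕ} (y : Fin d → ZMod 2)

abbrev hyperSign (z : Fin d → ZMod 2) (i : Fin d) : ℝ := if z i = y i then 1 else -1

lemma abs_hyperSign_le_one (z : Fin d → ZMod 2) (i : Fin d) : |hyperSign y z i| ≤ 1 := by
  unfold hyperSign
  split_ifs <;> simp

lemma one_add_hyperSign_mul_exp_pos {t : ℝ} (ht : t < 1) (z : Fin d → ZMod 2) (i : Fin d) :
    0 < 1 + hyperSign y z i * exp (-2 * (1 - t)) :=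
  one_add_mul_pos_of_abs_le_of_abs_lt (abs_hyperSign_le_one y z i)
    (abs_exp_neg_two_mul_lt_one (by linarith))

lemma hyperSign_add_single_self (z : Fin d → ZMod 2) (i : Fin d) :
    hyperSign y (z + Pi.single i 1) i = -hyperSign y z i := by
  simp only [hyperSign, Pi.add_apply, Pi.single_eq_same, ZMod.two_ite_add_one_eq]

lemma hyperPsi_flip_sub (t : ℝ) (z : Fin d → ZMod 2) (i : Fin d) :
    hyperPsi d y t (z + Pi.single i 1) - hyperPsi d y t z =
      log (1 - hyperSign y z i * exp (-2 * (1 - t))) -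
        log (1 + hyperSign y z i * exp (-2 * (1 - t))) := by
  unfold hyperPsi
  rw [Fintype.sum_add_single_sub_sum
    (fun j a => log (1 + (if a = y j then (1 : ℝ) else -1) * exp (-2 * (1 - t)))),
    ZMod.two_ite_add_one_eq, neg_mul, ← sub_eq_add_neg]

lemma exp_hyperPsi_flip_sub {t : ℝ} (ht : t < 1) (z : Fin d → ZMod 2) (i : Fin d) :
    exp (hyperPsi d y t (z + Pi.single i 1) - hyperPsi d y t z) =
      (1 - hyperSign y z i * exp (-2 * (1 - t))) /
        (1 + hyperSign y z i * exp (-2 * (1 - t))) := by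
  have hflip := one_add_hyperSign_mul_exp_pos y ht (z + Pi.single i 1) i
  rw [hyperSign_add_single_self, neg_mul, ← sub_eq_add_neg] at hflip
  rw [hyperPsi_flip_sub, exp_sub, exp_log hflip, exp_log (one_add_hyperSign_mul_exp_pos y ht z i)]

lemma hasDerivAt_hyperPsi {t : ℝ} (ht : t < 1) (z : Fin d → ZMod 2) :
    HasDerivAt (fun s => hyperPsi d y s z)
      (∑ i, 2 * (hyperSign y z i * exp (-2 * (1 - t))) /
        (1 + hyperSign y z i * exp (-2 * (1 - t)))) t :=
  HasDerivAt.fun_sum fun i _ =>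
    hasDerivAt_log_one_add_mul_exp (one_add_hyperSign_mul_exp_pos y ht z i).ne'

end hypercube

theorem stmt11_general (d : ℕ) (y : Fin d → ZMod 2) :
    (∀ z : Fin d → ZMod 2, ∀ t ∈ Set.Ico (0 : ℝ) 1,
      ∃ D : ℝ, HasDerivAt (fun s => hyperPsi d y s z) D t ∧
        D + ∑ i : Fin d,
          (Real.exp (hyperPsi d y t (z + Pi.single i 1) - hyperPsi d y t z) - 1) = 0) ∧
    (∀ t ∈ Set.Ico (0 : ℝ) 1, ∀ (z : Fin d → ZMod 2) (i : Fin d),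
      (z i = y i →
        Real.exp (hyperPsi d y t (z + Pi.single i 1) - hyperPsi d y t z) =
          Real.tanh (1 - t)) ∧
      (z i ≠ y i →
        Real.exp (hyperPsi d y t (z + Pi.single i 1) - hyperPsi d y t z) =
          Real.cosh (1 - t) / Real.sinh (1 - t))) := by
  refine ⟨fun z t ht => ⟨_, hasDerivAt_hyperPsi y ht.2 z, ?_⟩,
    fun t ht z i => ⟨fun h => ?_, fun h => ?_⟩⟩
  · simp only [exp_hyperPsi_flip_sub y ht.2, ← Finset.sum_add_distrib]
    exact Finset.sum_eq_zero fun i _ =>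
      div_add_one_sub_div_sub_one_eq_zero (one_add_hyperSign_mul_exp_pos y ht.2 z i).ne'
  · rw [exp_hyperPsi_flip_sub y ht.2, tanh_eq_one_sub_div_one_add]
    simp [hyperSign, h]
  · rw [exp_hyperPsi_flip_sub y ht.2, cosh_div_sinh_eq_one_add_div_one_sub]
    simp [hyperSign, h, sub_eq_add_neg]

/-- For the simple random walk on the hypercube `(ℤ/2ℤ)^d` and a fixed target
`y`, the explicit potential `ψ` above satisfies: (i) `t ↦ ψ_t(z)` is differentiable on `[0,1)`
and solves the HJB equation `∂_t ψ_t(z) + ∑ᵢ (exp(ψ_t(zⁱ) − ψ_t(z)) − 1) = 0`, where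
`zⁱ = z + gᵢ` flips the `i`-th coordinate; and (ii) `exp(ψ_t(zⁱ) − ψ_t(z))` equals
`tanh(1−t)` if `zᵢ = yᵢ` and `coth(1−t) = cosh(1−t)/sinh(1−t)` if `zᵢ ≠ yᵢ`. -/
theorem stmt11 (d : ℕ) (hd : 1 ≤ d) (y : Fin d → ZMod 2) :
    (∀ z : Fin d → ZMod 2, ∀ t ∈ Set.Ico (0 : ℝ) 1,
      ∃ D : ℝ, HasDerivAt (fun s => hyperPsi d y s z) D t ∧
        D + ∑ i : Fin d,
          (Real.exp (hyperPsi d y t (z + Pi.single i 1) - hyperPsi d y t z) - 1) = 0) ∧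
    (∀ t ∈ Set.Ico (0 : ℝ) 1, ∀ (z : Fin d → ZMod 2) (i : Fin d),
      (z i = y i →
        Real.exp (hyperPsi d y t (z + Pi.single i 1) - hyperPsi d y t z) =
          Real.tanh (1 - t)) ∧
      (z i ≠ y i →
        Real.exp (hyperPsi d y t (z + Pi.single i 1) - hyperPsi d y t z) =
          Real.cosh (1 - t) / Real.sinh (1 - t))) :=
  stmt11_general d y
end

section
/- Let λ, μ > 0. There exists a₀ > 0 such that for every a ≥ a₀ the sequence (x_n)_{n≥0} defined by x₀ = a and x_{n+1} = μ + a − λμ/x_n satisfies: x_n > 0 for all n, and there exist constants 0 < m ≤ M < ∞ with m ≤ x_n ≤ M for all n. -/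
/-- For every `λ, μ > 0` there exists `a₀ > 0` such that for every `a ≥ a₀`
the recursion `x₀ = a`, `x_{n+1} = μ + a − λμ/x_n` stays positive and is bounded away from `0`
and `∞`. -/
theorem stmt12 (lam mu : ℝ) (hlam : 0 < lam) (hmu : 0 < mu) :
    ∃ a₀ : ℝ, 0 < a₀ ∧ ∀ a : ℝ, a₀ ≤ a → ∀ x : ℕ → ℝ, x 0 = a →
      (∀ n : ℕ, x (n + 1) = mu + a - lam * mu / x n) →
      (∀ n : ℕ, 0 < x n) ∧
      ∃ m M : ℝ, 0 < m ∧ m ≤ M ∧ ∀ n : ℕ, m ≤ x n ∧ x n ≤ M := by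
  refine ⟨lam, hlam, fun a ha x hx0 hrec => ?_⟩
  have ha0 : 0 < a := lt_of_lt_of_le hlam ha
  have key : ∀ n, a ≤ x n := by
    intro n
    induction n with
    | zero => simp [hx0]
    | succ n ih =>
      have hxn : 0 < x n := lt_of_lt_of_le ha0 ih
      have hlamx : lam ≤ x n := le_trans ha ih
      have hdiv : lam * mu / x n ≤ mu := by
        rw [div_le_iff₀ hxn]
        calc lam * mu = mu * lam := mul_comm _ _
          _ ≤ mu * x n := by exact mul_le_mul_of_nonneg_left hlamx hmu.le
      rw [hrec n]
      linarith
  have hpos : ∀ n, 0 < x n := fun n => lt_of_lt_of_le ha0 (key n)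
  refine ⟨hpos, a, mu + a, ha0, by linarith, fun n => ⟨key n, ?_⟩⟩
  cases n with
  | zero => simp [hx0]; linarith
  | succ n =>
    rw [hrec n]
    have : 0 < lam * mu / x n := div_pos (mul_pos hlam hmu) (hpos n)
    linarith
end

section
/- Let t ∈ (0,1), let a, b : ℝ → ℝ be continuous on a neighbourhood of t, and let f : ℝ → ℝ be continuously differentiable on a neighbourhood of t with f(t) > 0. For h > 0 small and τ ∈ [0,1] define I(h,τ) := ∫₀^τ exp(−∫₀^{hr} a(t+s) ds)·f(t+hr)·exp(−∫_{hr}^{h} b(t+s) ds) dr, and set χ := f′(t)/f(t) + b(t) − a(t). Then, as h → 0⁺: (i) for every fixed τ ∈ [0,1], I(h,τ) = f(t)·(τ + h·(χ·τ²/2 − b(t)·τ)) + o(h); (ii) I(h,1/2)/I(h,1) = 1/2 − (h/8)·χ + o(h). -/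
/-!
Write `A(u) = ∫₀^u a(t+s) ds` and `B(u) = ∫₀^u b(t+s) ds`. The integrand of `I(h,τ)` factors as
`exp(-B(h)) · φ(hr)` with `φ(u) = exp(B(u) - A(u)) f(t+u)`, and `φ` is differentiable at `0` with
`φ(0) = f(t)`, `φ'(0) = f(t) χ`. Averaging, `h ↦ ∫₀^τ φ(hr) dr` is differentiable at `0` with
derivative `φ'(0) τ²/2`, so `h ↦ I(h,τ)` is differentiable at `h = 0`, with value `τ f(t)` and
derivative `f(t) (χ τ²/2 - b(t) τ)`. Claim (i) is this first-order expansion, and (ii) follows from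
the quotient rule. Only the values of `a`, `b`, `f` near `t` enter, so they may first be replaced
by continuous functions on all of `ℝ`.
-/

open Asymptotics

/-- The quantity `I(h,τ) = ∫₀^τ exp(−∫₀^{hr} a(t+s) ds) · f(t+hr) · exp(−∫_{hr}^h b(t+s) ds) dr`
appearing in the short-time expansion of the one-jump conditional probabilities. -/
noncomputable def oneJumpIntegral (t : ℝ) (a b f : ℝ → ℝ) (h τ : ℝ) : ℝ :=
  ∫ r in (0 : ℝ)..τ,
    Real.exp (-(∫ s in (0 : ℝ)..(h * r), a (t + s))) * f (t + h * r) *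
      Real.exp (-(∫ s in (h * r)..h, b (t + s)))

open Set Filter Topology intervalIntegral

theorem ContinuousOn.exists_continuous_eventuallyEq {β : Type*} [TopologicalSpace β]
    {g : ℝ → β} {U : Set ℝ} {x : ℝ} (hU : U ∈ 𝓝 x) (hg : ContinuousOn g U) :
    ∃ g' : ℝ → β, Continuous g' ∧ g' =ᶠ[𝓝 x] g := by
  obtain ⟨δ, hδ, hsub⟩ := Metric.nhds_basis_closedBall.mem_iff.mp hU
  rw [Real.closedBall_eq_Icc] at hsub
  refine ⟨IccExtend (by linarith) ((Icc (x - δ) (x + δ)).domRestrict g),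
    (hg.mono hsub).domRestrict.Icc_extend', ?_⟩
  filter_upwards [Icc_mem_nhds (by linarith : x - δ < x) (by linarith : x < x + δ)] with y hy
  exact IccExtend_of_mem _ _ hy

theorem hasDerivAt_integral_comp_mul {g : ℝ → ℝ} {c : ℝ} (hg : Continuous g)
    (hd : HasDerivAt g c 0) (τ : ℝ) :
    HasDerivAt (fun h => ∫ r in (0 : ℝ)..τ, g (h * r)) (c * τ ^ 2 / 2) 0 := by
  rw [hasDerivAt_iff_isLittleO_nhds_zero] at hd ⊢
  rw [isLittleO_iff]
  intro ε hε
  set ε' := ε / (τ ^ 2 + 1) with hε'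
  obtain ⟨δ, hδ, hgδ⟩ :=
    Metric.eventually_nhds_iff.mp (isLittleO_iff.mp hd (by positivity : 0 < ε'))
  filter_upwards [Metric.ball_mem_nhds 0 (by positivity : 0 < δ / (|τ| + 1))] with h hh
  rw [mem_ball_zero_iff, Real.norm_eq_abs, lt_div_iff₀ (by positivity)] at hh
  have hrem : ∀ r ∈ uIoc 0 τ, ‖g (h * r) - g 0 - c * h * r‖ ≤ ε' * (|h| * |τ|) := by
    intro r hr
    have hr' : |r| ≤ |τ| := by
      simpa using abs_sub_left_of_mem_uIcc (uIoc_subset_uIcc hr)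
    have hhr : |h * r| ≤ |h| * |τ| := by
      rw [abs_mul]; exact mul_le_mul_of_nonneg_left hr' (abs_nonneg h)
    have := hgδ (y := h * r) (by rw [Real.dist_eq, sub_zero]; nlinarith [abs_nonneg h])
    simp only [zero_add, smul_eq_mul, Real.norm_eq_abs] at this ⊢
    calc |g (h * r) - g 0 - c * h * r| = |g (h * r) - g 0 - h * r * c| := by ring_nf
      _ ≤ ε' * |h * r| := this
      _ ≤ ε' * (|h| * |τ|) := by gcongr
  have hint : (∫ r in (0 : ℝ)..τ, g ((0 + h) * r)) - (∫ r in (0 : ℝ)..τ, g (0 * r))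
      - h • (c * τ ^ 2 / 2) = ∫ r in (0 : ℝ)..τ, (g (h * r) - g 0 - c * h * r) := by
    have hgi : IntervalIntegrable (fun r => g (h * r)) MeasureTheory.volume 0 τ :=
      (hg.comp (continuous_const.mul continuous_id)).intervalIntegrable _ _
    have hlin : IntervalIntegrable (fun r => c * h * r) MeasureTheory.volume 0 τ :=
      (continuous_const.mul continuous_id).intervalIntegrable _ _
    rw [integral_sub (hgi.sub intervalIntegrable_const) hlin, integral_sub hgi
      intervalIntegrable_const, integral_const_mul, integral_id]
    simp only [zero_add, zero_mul, integral_const, smul_eq_mul]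
    ring
  rw [hint]
  calc ‖∫ r in (0 : ℝ)..τ, (g (h * r) - g 0 - c * h * r)‖ ≤ ε' * (|h| * |τ|) * |τ - 0| :=
        norm_integral_le_of_norm_le_const hrem
    _ = ε * (τ ^ 2 / (τ ^ 2 + 1)) * ‖h‖ := by
        rw [sub_zero, Real.norm_eq_abs, hε', ← sq_abs τ]; field_simp
    _ ≤ ε * ‖h‖ := by
        gcongr
        exact mul_le_of_le_one_right hε.le (div_le_one_of_le₀ (by linarith) (by positivity))

theorem mul_mem_uIcc_zero {h r : ℝ} (hr : r ∈ Icc (0 : ℝ) 1) : h * r ∈ uIcc 0 h := by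
  rcases le_total 0 h with h0 | h0
  · rw [uIcc_of_le h0]
    exact ⟨mul_nonneg h0 hr.1, mul_le_of_le_one_right h0 hr.2⟩
  · rw [uIcc_of_ge h0]
    exact ⟨by nlinarith [hr.2], mul_nonpos_of_nonpos_of_nonneg h0 hr.1⟩

theorem hasDerivAt_integral_shift {g : ℝ → ℝ} (hg : Continuous g) (t : ℝ) :
    HasDerivAt (fun u => ∫ s in (0 : ℝ)..u, g (t + s)) (g t) 0 := by
  simpa using ((hg.comp (continuous_const_add t)).integral_hasStrictDerivAt 0 0).hasDerivAt

noncomputable def oneJumpDensity (t : ℝ) (a b f : ℝ → ℝ) (u : ℝ) : ℝ :=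
  Real.exp ((∫ s in (0 : ℝ)..u, b (t + s)) - ∫ s in (0 : ℝ)..u, a (t + s)) * f (t + u)

section

variable {t : ℝ} {a b f : ℝ → ℝ}

theorem continuous_oneJumpDensity (ha : Continuous a) (hb : Continuous b) (hf : Continuous f) :
    Continuous (oneJumpDensity t a b f) := by
  unfold oneJumpDensity
  fun_prop

theorem oneJumpDensity_zero : oneJumpDensity t a b f 0 = f t := by
  simp [oneJumpDensity]

theorem hasDerivAt_oneJumpDensity {d : ℝ} (ha : Continuous a) (hb : Continuous b)
    (hf : HasDerivAt f d t) :
    HasDerivAt (oneJumpDensity t a b f) (d + (b t - a t) * f t) 0 := by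
  have hE : HasDerivAt (fun u => Real.exp ((∫ s in (0 : ℝ)..u, b (t + s)) -
      ∫ s in (0 : ℝ)..u, a (t + s))) (b t - a t) 0 := by
    simpa using ((hasDerivAt_integral_shift hb t).sub (hasDerivAt_integral_shift ha t)).exp
  have hF : HasDerivAt (fun u => f (t + u)) d 0 :=
    HasDerivAt.comp_const_add t 0 (by simpa using hf)
  exact (hE.mul hF).congr_deriv (by simp; ring)

theorem oneJumpIntegral_eq_exp_mul (hb : Continuous b) (h τ : ℝ) :
    oneJumpIntegral t a b f h τ =
      Real.exp (-∫ s in (0 : ℝ)..h, b (t + s)) *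
        ∫ r in (0 : ℝ)..τ, oneJumpDensity t a b f (h * r) := by
  have hbi : ∀ x y : ℝ, IntervalIntegrable (fun s => b (t + s)) MeasureTheory.volume x y :=
    fun _ _ => (hb.comp (continuous_const_add t)).intervalIntegrable _ _
  rw [← integral_const_mul]
  refine integral_congr fun r _ => ?_
  rw [oneJumpDensity, ← integral_interval_sub_left (hbi 0 h) (hbi 0 (h * r))]
  rw [mul_left_comm, ← mul_assoc, ← Real.exp_add, mul_right_comm, ← Real.exp_add]
  ring_nf

theorem oneJumpIntegral_zero_left (τ : ℝ) : oneJumpIntegral t a b f 0 τ = τ * f t := by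
  simp [oneJumpIntegral]

theorem hasDerivAt_oneJumpIntegral {d τ : ℝ} (ha : Continuous a) (hb : Continuous b)
    (hf : Continuous f) (hfd : HasDerivAt f d t) :
    HasDerivAt (fun h => oneJumpIntegral t a b f h τ)
      ((d + (b t - a t) * f t) * τ ^ 2 / 2 - b t * (τ * f t)) 0 := by
  have hE : HasDerivAt (fun h => Real.exp (-∫ s in (0 : ℝ)..h, b (t + s))) (-b t) 0 := by
    simpa using (hasDerivAt_integral_shift hb t).neg.exp
  have hJ := hasDerivAt_integral_comp_mul (continuous_oneJumpDensity ha hb hf)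
    (hasDerivAt_oneJumpDensity ha hb hfd) τ
  simp_rw [oneJumpIntegral_eq_exp_mul hb]
  exact (hE.mul hJ).congr_deriv (by simp [oneJumpDensity_zero]; ring)

theorem oneJumpIntegral_congr {a' b' f' : ℝ → ℝ} {h τ : ℝ} (hτ : τ ∈ Icc (0 : ℝ) 1)
    (ha : EqOn (fun s => a (t + s)) (fun s => a' (t + s)) (uIcc 0 h))
    (hb : EqOn (fun s => b (t + s)) (fun s => b' (t + s)) (uIcc 0 h))
    (hf : EqOn (fun s => f (t + s)) (fun s => f' (t + s)) (uIcc 0 h)) :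
    oneJumpIntegral t a b f h τ = oneJumpIntegral t a' b' f' h τ := by
  refine integral_congr fun r hr => ?_
  rw [uIcc_of_le hτ.1] at hr
  have hhr : h * r ∈ uIcc 0 h := mul_mem_uIcc_zero (Icc_subset_Icc_right hτ.2 hr)
  rw [integral_congr (ha.mono (uIcc_subset_uIcc left_mem_uIcc hhr)),
    integral_congr (hb.mono (uIcc_subset_uIcc hhr right_mem_uIcc)),
    show f (t + h * r) = _ from hf hhr]

theorem oneJumpIntegral_eventuallyEq {a' b' f' : ℝ → ℝ} {τ : ℝ} (hτ : τ ∈ Icc (0 : ℝ) 1)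
    (ha : a =ᶠ[𝓝 t] a') (hb : b =ᶠ[𝓝 t] b') (hf : f =ᶠ[𝓝 t] f') :
    (fun h => oneJumpIntegral t a b f h τ) =ᶠ[𝓝 0] fun h => oneJumpIntegral t a' b' f' h τ := by
  have hshift : Tendsto (fun s => t + s) (𝓝 0) (𝓝 t) := by
    simpa using (continuous_const_add t).tendsto 0
  obtain ⟨ε, hε, hball⟩ := Metric.eventually_nhds_iff_ball.mp
    (hshift.eventually (ha.and (hb.and hf)))
  filter_upwards [Metric.ball_mem_nhds 0 hε] with h hh
  have hsub : uIcc 0 h ⊆ Metric.ball 0 ε :=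
    (convex_ball 0 ε).ordConnected.uIcc_subset (Metric.mem_ball_self hε) hh
  exact oneJumpIntegral_congr hτ (fun s hs => (hball s (hsub hs)).1)
    (fun s hs => (hball s (hsub hs)).2.1) (fun s hs => (hball s (hsub hs)).2.2)

theorem hasDerivAt_oneJumpIntegral_of_local {d τ : ℝ} (hτ : τ ∈ Icc (0 : ℝ) 1)
    (ha : ∃ U ∈ 𝓝 t, ContinuousOn a U) (hb : ∃ U ∈ 𝓝 t, ContinuousOn b U)
    (hf : ∃ U ∈ 𝓝 t, ContinuousOn f U) (hfd : HasDerivAt f d t) :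
    HasDerivAt (fun h => oneJumpIntegral t a b f h τ)
      ((d + (b t - a t) * f t) * τ ^ 2 / 2 - b t * (τ * f t)) 0 := by
  obtain ⟨a', ha'c, ha'⟩ := ha.elim fun U ⟨hU, hc⟩ => hc.exists_continuous_eventuallyEq hU
  obtain ⟨b', hb'c, hb'⟩ := hb.elim fun U ⟨hU, hc⟩ => hc.exists_continuous_eventuallyEq hU
  obtain ⟨f', hf'c, hf'⟩ := hf.elim fun U ⟨hU, hc⟩ => hc.exists_continuous_eventuallyEq hU
  have hI := hasDerivAt_oneJumpIntegral (τ := τ) ha'c hb'c hf'c (hfd.congr_of_eventuallyEq hf')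
  rw [ha'.eq_of_nhds, hb'.eq_of_nhds, hf'.eq_of_nhds] at hI
  exact hI.congr_of_eventuallyEq (oneJumpIntegral_eventuallyEq hτ ha'.symm hb'.symm hf'.symm)

end

theorem stmt13_general (t : ℝ)
    (a b f f' : ℝ → ℝ)
    (ha : ∃ U ∈ nhds t, ContinuousOn a U)
    (hb : ∃ U ∈ nhds t, ContinuousOn b U)
    (hf : ∃ U ∈ nhds t, (∀ s ∈ U, HasDerivAt f (f' s) s) ∧ ContinuousOn f' U)
    (hft : 0 < f t) :
    (∀ τ ∈ Set.Icc (0 : ℝ) 1,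
      (fun h : ℝ => oneJumpIntegral t a b f h τ -
          f t * (τ + h * ((f' t / f t + b t - a t) * τ ^ 2 / 2 - b t * τ)))
        =o[nhdsWithin 0 (Set.Ioi 0)] fun h : ℝ => h) ∧
    ((fun h : ℝ => oneJumpIntegral t a b f h (1 / 2) / oneJumpIntegral t a b f h 1 -
        (1 / 2 - h / 8 * (f' t / f t + b t - a t)))
      =o[nhdsWithin 0 (Set.Ioi 0)] fun h : ℝ => h) := by
  obtain ⟨U, hU, hfU, -⟩ := hf
  have hfc : ∃ U ∈ 𝓝 t, ContinuousOn f U :=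
    ⟨U, hU, fun s hs => (hfU s hs).continuousAt.continuousWithinAt⟩
  have hI : ∀ τ ∈ Icc (0 : ℝ) 1, HasDerivAt (fun h => oneJumpIntegral t a b f h τ)
      (f t * ((f' t / f t + b t - a t) * τ ^ 2 / 2 - b t * τ)) 0 := fun τ hτ =>
    (hasDerivAt_oneJumpIntegral_of_local hτ ha hb hfc (hfU t (mem_of_mem_nhds hU))).congr_deriv
      (by field_simp; ring)
  refine ⟨fun τ hτ => ?_, ?_⟩
  · refine ((hasDerivAt_iff_isLittleO.mp (hI τ hτ)).mono nhdsWithin_le_nhds).congr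
      (fun h => ?_) sub_zero
    rw [oneJumpIntegral_zero_left, smul_eq_mul]
    ring
  · have hR := (hI (1 / 2) (by norm_num)).div (hI 1 (by norm_num))
      (by rw [oneJumpIntegral_zero_left]; positivity)
    refine ((hasDerivAt_iff_isLittleO.mp hR).mono nhdsWithin_le_nhds).congr
      (fun h => ?_) sub_zero
    simp only [Pi.div_apply, oneJumpIntegral_zero_left, smul_eq_mul]
    field_simp
    ring

/-- Let `t ∈ (0,1)`, let `a, b` be continuous on a neighbourhood of `t`, and
let `f` be continuously differentiable (with derivative `f'`) on a neighbourhood of `t` with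
`f(t) > 0`.  Set `χ := f'(t)/f(t) + b(t) − a(t)`.  Then, as `h → 0⁺`:
(i) for every fixed `τ ∈ [0,1]`, `I(h,τ) = f(t)·(τ + h·(χ·τ²/2 − b(t)·τ)) + o(h)`;
(ii) `I(h,1/2)/I(h,1) = 1/2 − (h/8)·χ + o(h)`. -/
theorem stmt13 (t : ℝ) (ht : t ∈ Set.Ioo (0 : ℝ) 1)
    (a b f f' : ℝ → ℝ)
    (ha : ∃ U ∈ nhds t, ContinuousOn a U)
    (hb : ∃ U ∈ nhds t, ContinuousOn b U)
    (hf : ∃ U ∈ nhds t, (∀ s ∈ U, HasDerivAt f (f' s) s) ∧ ContinuousOn f' U)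
    (hft : 0 < f t) :
    (∀ τ ∈ Set.Icc (0 : ℝ) 1,
      (fun h : ℝ => oneJumpIntegral t a b f h τ -
          f t * (τ + h * ((f' t / f t + b t - a t) * τ ^ 2 / 2 - b t * τ)))
        =o[nhdsWithin 0 (Set.Ioi 0)] fun h : ℝ => h) ∧
    ((fun h : ℝ => oneJumpIntegral t a b f h (1 / 2) / oneJumpIntegral t a b f h 1 -
        (1 / 2 - h / 8 * (f' t / f t + b t - a t)))
      =o[nhdsWithin 0 (Set.Ioi 0)] fun h : ℝ => h) :=
  stmt13_general t a b f f' ha hb hf hft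
end

section
/- Let (Ω,ℱ) be a measurable space, 𝒳 a countable set with the discrete σ-algebra, X₀, X₁ : Ω → 𝒳 measurable, and P, R probability measures on Ω. Suppose there exists k : 𝒳×𝒳 → [0,∞) such that P(A) = ∫_A k(X₀,X₁) dR for every A ∈ ℱ. Then for every (x,y) ∈ 𝒳² with P₀₁(x,y) > 0 one has R₀₁(x,y) > 0 and P^{xy} = R^{xy}. -/
open MeasureTheory ProbabilityTheory
open scoped NNReal ENNReal

/-!
On the event `{X₀ = x, X₁ = y}` the density `k(X₀, X₁)` is the constant `k x y`, so there `P` is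
the multiple `k x y • R`. That constant is nonzero because `P` charges the event, and it cancels
in the normalisation of the two conditioned measures.
-/

namespace MeasureTheory.Measure

variable {Ω : Type*} [MeasurableSpace Ω]

theorem withDensity_restrict_eq_smul_of_eqOn {μ : Measure Ω} {f : Ω → ℝ≥0∞} {s : Set Ω}
    {c : ℝ≥0∞} (hs : MeasurableSet s) (hf : Set.EqOn f (fun _ ↦ c) s) :
    (μ.withDensity f).restrict s = c • μ.restrict s := by
  rw [restrict_withDensity hs, withDensity_congr_ae ((ae_restrict_iff' hs).2 (.of_forall hf)),
    withDensity_const]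

end MeasureTheory.Measure

namespace ProbabilityTheory

variable {Ω : Type*} [MeasurableSpace Ω]

theorem cond_eq_of_restrict_eq_smul {μ ν : Measure Ω} {s : Set Ω} {c : ℝ≥0∞}
    (hc₀ : c ≠ 0) (hc : c ≠ ∞) (h : μ.restrict s = c • ν.restrict s) : μ[|s] = ν[|s] := by
  have hμs : μ s = c * ν s := by
    rw [← Measure.restrict_apply_univ, h, Measure.smul_apply, Measure.restrict_apply_univ,
      smul_eq_mul]
  rw [cond, cond, h, hμs, smul_smul, ENNReal.mul_inv (.inl hc₀) (.inl hc), mul_right_comm,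
    ENNReal.inv_mul_cancel hc₀ hc, one_mul]

end ProbabilityTheory

theorem stmt15_general {Ω : Type*} [MeasurableSpace Ω] {𝒳 : Type*} [MeasurableSpace 𝒳]
    [MeasurableSingletonClass 𝒳]
    (X₀ X₁ : Ω → 𝒳) (hX₀ : Measurable X₀) (hX₁ : Measurable X₁)
    (P R : Measure Ω)
    (k : 𝒳 → 𝒳 → ℝ≥0)
    (hk : ∀ A : Set Ω, MeasurableSet A →
      P A = ∫⁻ ω, (k (X₀ ω) (X₁ ω) : ℝ≥0∞) ∂(R.restrict A)) :
    ∀ x y : 𝒳, 0 < P {ω | X₀ ω = x ∧ X₁ ω = y} →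
      0 < R {ω | X₀ ω = x ∧ X₁ ω = y} ∧
      ProbabilityTheory.cond P {ω | X₀ ω = x ∧ X₁ ω = y} =
        ProbabilityTheory.cond R {ω | X₀ ω = x ∧ X₁ ω = y} := by
  intro x y hP
  set E : Set Ω := {ω | X₀ ω = x ∧ X₁ ω = y}
  have hE : MeasurableSet E :=
    (hX₀ (measurableSet_singleton x)).inter (hX₁ (measurableSet_singleton y))
  have hPR : P = R.withDensity fun ω ↦ k (X₀ ω) (X₁ ω) :=
    Measure.ext fun A hA ↦ by rw [hk A hA, withDensity_apply _ hA]
  have hPE : P.restrict E = (k x y : ℝ≥0∞) • R.restrict E := by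
    rw [hPR]
    exact Measure.withDensity_restrict_eq_smul_of_eqOn hE fun ω ⟨hω₀, hω₁⟩ ↦ by simp [hω₀, hω₁]
  have hPE_apply : P E = k x y * R E := by
    simpa using congr($hPE Set.univ)
  have hk₀ : (k x y : ℝ≥0∞) ≠ 0 := fun h ↦ hP.ne' (by simp [hPE_apply, h])
  refine ⟨pos_of_ne_zero fun hR ↦ hP.ne' (by simp [hPE_apply, hR]), ?_⟩
  exact cond_eq_of_restrict_eq_smul hk₀ ENNReal.coe_ne_top hPE

/-- If `P = k(X₀, X₁)·R` for some nonnegative `k : 𝒳 × 𝒳 → [0,∞)`, then for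
every `(x,y)` with `P₀₁(x,y) > 0` one has `R₀₁(x,y) > 0` and the bridges coincide:
`P^{xy} = R^{xy}`. -/
theorem stmt15 {Ω : Type*} [MeasurableSpace Ω] {𝒳 : Type*} [MeasurableSpace 𝒳]
    [MeasurableSingletonClass 𝒳] [Countable 𝒳]
    (X₀ X₁ : Ω → 𝒳) (hX₀ : Measurable X₀) (hX₁ : Measurable X₁)
    (P R : Measure Ω) [IsProbabilityMeasure P] [IsProbabilityMeasure R]
    (k : 𝒳 → 𝒳 → ℝ≥0)
    (hk : ∀ A : Set Ω, MeasurableSet A →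
      P A = ∫⁻ ω, (k (X₀ ω) (X₁ ω) : ℝ≥0∞) ∂(R.restrict A)) :
    ∀ x y : 𝒳, 0 < P {ω | X₀ ω = x ∧ X₁ ω = y} →
      0 < R {ω | X₀ ω = x ∧ X₁ ω = y} ∧
      ProbabilityTheory.cond P {ω | X₀ ω = x ∧ X₁ ω = y} =
        ProbabilityTheory.cond R {ω | X₀ ω = x ∧ X₁ ω = y} :=
  stmt15_general X₀ X₁ hX₀ hX₁ P R k hk
end

section
/- Let (Ω,ℱ) be a measurable space, 𝒳 a countable set with the discrete σ-algebra, X₀, X₁ : Ω → 𝒳 measurable, and P, R probability measures on Ω. Suppose supp P₀₁ ⊆ supp R₀₁ and P^{xy} = R^{xy} for every (x,y) ∈ supp P₀₁. Define k : 𝒳×𝒳 → [0,∞) by k(x,y) := P₀₁(x,y)/R₀₁(x,y) if R₀₁(x,y) > 0 and k(x,y) := 0 otherwise. Then P(A) = ∫_A k(X₀,X₁) dR for every A ∈ ℱ, and ∑_{(x,y)∈𝒳²} k(x,y)·R₀₁(x,y) = 1. -/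
/-!
Group `Ω` into the fibres of `Z = (X₀, X₁)`. On a fibre of positive `P`-mass the bridges agree,
so there `P` is the constant multiple `P₀₁(x,y) / R₀₁(x,y)` of `R`; a fibre of zero `P`-mass
contributes nothing. As the countably many fibres partition `Ω`, `P` has density `k(X₀, X₁)`
with respect to `R`, and the normalisation is the total mass of `P`.
-/

open MeasureTheory ProbabilityTheory
open scoped ENNReal

namespace ENNReal

lemma ofReal_toReal_div_toReal {a b : ℝ≥0∞} (ha : a ≠ ∞) (hab : a ≠ 0 → b ≠ 0) :
    ENNReal.ofReal (a.toReal / b.toReal) = a / b := by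
  rw [← toReal_div, ofReal_toReal]
  rcases eq_or_ne a 0 with rfl | ha₀
  · simp
  · exact div_ne_top ha (hab ha₀)

lemma toReal_div_toReal_mul_toReal {a b : ℝ≥0∞} (hb : b ≠ ∞) (hab : a ≠ 0 → b ≠ 0) :
    a.toReal / b.toReal * b.toReal = a.toReal := by
  rcases eq_or_ne a 0 with rfl | ha₀
  · simp
  · exact div_mul_cancel₀ _ (toReal_ne_zero.mpr ⟨hab ha₀, hb⟩)

end ENNReal

namespace MeasureTheory

variable {Ω ι : Type*} [MeasurableSpace Ω] [MeasurableSpace ι] [MeasurableSingletonClass ι]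
  [Countable ι] {f : Ω → ι}

lemma tsum_measure_fiber (hf : Measurable f) (μ : Measure Ω) :
    ∑' i, μ (f ⁻¹' {i}) = μ Set.univ := by
  rw [← tsum_univ, tsum_measure_preimage_singleton Set.countable_univ
    fun i _ ↦ hf (measurableSet_singleton i), Set.preimage_univ]

lemma Measure.restrict_eq_smul_restrict_of_cond_eq {μ ν : Measure Ω} [IsFiniteMeasure μ]
    {s : Set Ω} (h : μ[|s] = ν[|s]) : μ.restrict s = (μ s / ν s) • ν.restrict s := by
  have hμ : μ.restrict s = μ s • μ[|s] := by
    rcases eq_or_ne (μ s) 0 with hs | hs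
    · simp [Measure.restrict_eq_zero.mpr hs, hs]
    · rw [ProbabilityTheory.cond, smul_smul, ENNReal.mul_inv_cancel hs (measure_ne_top μ s),
        one_smul]
  rw [hμ, h, ProbabilityTheory.cond, smul_smul, div_eq_mul_inv]

lemma Measure.eq_withDensity_of_cond_fiber_eq (hf : Measurable f) {μ ν : Measure Ω}
    [IsFiniteMeasure μ] (h : ∀ i, μ (f ⁻¹' {i}) ≠ 0 → μ[|f ⁻¹' {i}] = ν[|f ⁻¹' {i}]) :
    μ = ν.withDensity fun ω ↦ μ (f ⁻¹' {f ω}) / ν (f ⁻¹' {f ω}) := by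
  have hcover : ⋃ i, f ⁻¹' {i} = Set.univ := by
    rw [← Set.preimage_iUnion, Set.iUnion_of_singleton, Set.preimage_univ]
  refine Measure.ext_of_iUnion_eq_univ hcover fun i ↦ ?_
  have hF : MeasurableSet (f ⁻¹' {i}) := hf (measurableSet_singleton i)
  have hμ : μ.restrict (f ⁻¹' {i}) =
      (μ (f ⁻¹' {i}) / ν (f ⁻¹' {i})) • ν.restrict (f ⁻¹' {i}) := by
    rcases eq_or_ne (μ (f ⁻¹' {i})) 0 with hi | hi
    · simp [Measure.restrict_eq_zero.mpr hi, hi]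
    · exact restrict_eq_smul_restrict_of_cond_eq (h i hi)
  rw [hμ, restrict_withDensity hF, ← withDensity_const]
  refine withDensity_congr_ae ((ae_restrict_mem hF).mono ?_)
  rintro ω (rfl : f ω = i)
  rfl

end MeasureTheory

/-- If `supp P₀₁ ⊆ supp R₀₁` and the bridges coincide (`P^{xy} = R^{xy}` for
every `(x,y) ∈ supp P₀₁`), then with `k(x,y) := P₀₁(x,y)/R₀₁(x,y)` (set to `0` when
`R₀₁(x,y) = 0`) one has `P = k(X₀, X₁)·R`, and `∑_{(x,y)} k(x,y)·R₀₁(x,y) = 1`. -/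
theorem stmt16 {Ω : Type*} [MeasurableSpace Ω] {𝒳 : Type*} [MeasurableSpace 𝒳]
    [MeasurableSingletonClass 𝒳] [Countable 𝒳]
    (X₀ X₁ : Ω → 𝒳) (hX₀ : Measurable X₀) (hX₁ : Measurable X₁)
    (P R : Measure Ω) [IsProbabilityMeasure P] [IsProbabilityMeasure R]
    (hsupp : ∀ x y : 𝒳, 0 < P {ω | X₀ ω = x ∧ X₁ ω = y} →
      0 < R {ω | X₀ ω = x ∧ X₁ ω = y})
    (hbridge : ∀ x y : 𝒳, 0 < P {ω | X₀ ω = x ∧ X₁ ω = y} →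
      ProbabilityTheory.cond P {ω | X₀ ω = x ∧ X₁ ω = y} =
        ProbabilityTheory.cond R {ω | X₀ ω = x ∧ X₁ ω = y})
    (k : 𝒳 → 𝒳 → ℝ)
    (hk₁ : ∀ x y : 𝒳, 0 < R {ω | X₀ ω = x ∧ X₁ ω = y} →
      k x y = (P {ω | X₀ ω = x ∧ X₁ ω = y}).toReal /
        (R {ω | X₀ ω = x ∧ X₁ ω = y}).toReal)
    (hk₂ : ∀ x y : 𝒳, ¬ 0 < R {ω | X₀ ω = x ∧ X₁ ω = y} → k x y = 0) :
    (∀ A : Set Ω, MeasurableSet A →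
      P A = lintegral (Measure.restrict R A) (fun ω => ENNReal.ofReal (k (X₀ ω) (X₁ ω)))) ∧
    ∑' p : 𝒳 × 𝒳, k p.1 p.2 * (R {ω | X₀ ω = p.1 ∧ X₁ ω = p.2}).toReal = 1 := by
  set Z : Ω → 𝒳 × 𝒳 := fun ω ↦ (X₀ ω, X₁ ω)
  have hfiber (x y : 𝒳) : {ω | X₀ ω = x ∧ X₁ ω = y} = Z ⁻¹' {(x, y)} := by
    ext; simp [Z]
  simp only [hfiber] at hsupp hbridge hk₁ hk₂ ⊢
  have hsupp' (x y : 𝒳) : P (Z ⁻¹' {(x, y)}) ≠ 0 → R (Z ⁻¹' {(x, y)}) ≠ 0 := by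
    simpa [pos_iff_ne_zero] using hsupp x y
  have hk (x y : 𝒳) : k x y = (P (Z ⁻¹' {(x, y)})).toReal / (R (Z ⁻¹' {(x, y)})).toReal := by
    by_cases h : 0 < R (Z ⁻¹' {(x, y)})
    · exact hk₁ x y h
    · simp [hk₂ x y h, nonpos_iff_eq_zero.mp (not_lt.mp h)]
  have hP := Measure.eq_withDensity_of_cond_fiber_eq (hX₀.prodMk hX₁)
    fun p hp ↦ hbridge p.1 p.2 (pos_iff_ne_zero.mpr hp)
  refine ⟨fun A hA ↦ ?_, ?_⟩
  · rw [hP, withDensity_apply _ hA]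
    refine lintegral_congr fun ω ↦ ?_
    rw [hk, ENNReal.ofReal_toReal_div_toReal (measure_ne_top _ _) (hsupp' _ _)]
  · calc ∑' p : 𝒳 × 𝒳, k p.1 p.2 * (R (Z ⁻¹' {(p.1, p.2)})).toReal
        = ∑' p, (P (Z ⁻¹' {p})).toReal := tsum_congr fun p ↦ by
          rw [hk, ENNReal.toReal_div_toReal_mul_toReal (measure_ne_top _ _) (hsupp' _ _)]
      _ = 1 := by
          rw [← ENNReal.tsum_toReal_eq fun _ ↦ measure_ne_top _ _,
            tsum_measure_fiber (hX₀.prodMk hX₁), measure_univ, ENNReal.toReal_one]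
end

section
/- Let (Ω,ℱ) be a measurable space, 𝒳 a countable set with the discrete σ-algebra, X₀, X₁ : Ω → 𝒳 measurable, and P, R probability measures on Ω. Suppose supp P₀₁ ⊆ supp R₀₁ and that there exists h : 𝒳×𝒳 → [0,∞) such that for every x with P₀(x) > 0 one has P^x(A) = ∫_A h(x,X₁) dR^x for every A ∈ ℱ. Then P^{xy} = R^{xy} for every (x,y) ∈ supp P₀₁. -/
/-!
`P^{xy}` is `P^x` conditioned on `{X₁ = y}`, and likewise for `R`. On that event the density
`h(x, X₁)` of `P^x` with respect to `R^x` is the constant `h(x, y)`, and conditioning is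
insensitive to a constant factor; `h(x, y) ≠ 0` because `P^x {X₁ = y} > 0`.
-/

open MeasureTheory ProbabilityTheory
open scoped NNReal ENNReal

namespace ProbabilityTheory

variable {Ω : Type*} [MeasurableSpace Ω] {μ ν : Measure Ω} {s : Set Ω}

lemma cond_eq_of_restrict_eq (h : μ.restrict s = ν.restrict s) : μ[|s] = ν[|s] := by
  rw [cond, cond, ← μ.restrict_apply_univ, ← ν.restrict_apply_univ, h]

lemma cond_smul {c : ℝ≥0∞} (hc₀ : c ≠ 0) (hc : c ≠ ∞) (μ : Measure Ω) (s : Set Ω) :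
    (c • μ)[|s] = μ[|s] := by
  simp only [cond, Measure.smul_apply, Measure.restrict_smul, smul_smul, smul_eq_mul,
    ENNReal.mul_inv (.inl hc₀) (.inl hc)]
  rw [mul_right_comm, ENNReal.inv_mul_cancel hc₀ hc, one_mul]

lemma restrict_withDensity_of_eqOn_const {f : Ω → ℝ≥0∞} {c : ℝ≥0∞} (hs : MeasurableSet s)
    (hf : ∀ ω ∈ s, f ω = c) : (μ.withDensity f).restrict s = c • μ.restrict s := by
  rw [restrict_withDensity hs, ← withDensity_const]
  exact withDensity_congr_ae (ae_restrict_of_forall_mem hs hf)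

lemma cond_withDensity_of_eqOn_const {f : Ω → ℝ≥0∞} {c : ℝ≥0∞} (hs : MeasurableSet s)
    (hf : ∀ ω ∈ s, f ω = c) (hc₀ : c ≠ 0) (hc : c ≠ ∞) : (μ.withDensity f)[|s] = μ[|s] := by
  rw [← cond_smul hc₀ hc μ s]
  exact cond_eq_of_restrict_eq <| by
    rw [restrict_withDensity_of_eqOn_const hs hf, Measure.restrict_smul]

end ProbabilityTheory

theorem stmt17_general {Ω : Type*} [MeasurableSpace Ω] {𝒳 : Type*} [MeasurableSpace 𝒳]
    [MeasurableSingletonClass 𝒳]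
    (X₀ X₁ : Ω → 𝒳) (hX₀ : Measurable X₀) (hX₁ : Measurable X₁)
    (P R : Measure Ω) [IsProbabilityMeasure P] [IsProbabilityMeasure R]
    (h : 𝒳 → 𝒳 → ℝ≥0)
    (hh : ∀ x : 𝒳, 0 < P {ω | X₀ ω = x} → ∀ A : Set Ω, MeasurableSet A →
      ProbabilityTheory.cond P {ω | X₀ ω = x} A =
        ∫⁻ ω in A, (h x (X₁ ω) : ℝ≥0∞) ∂(ProbabilityTheory.cond R {ω | X₀ ω = x})) :
    ∀ x y : 𝒳, 0 < P {ω | X₀ ω = x ∧ X₁ ω = y} →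
      ProbabilityTheory.cond P {ω | X₀ ω = x ∧ X₁ ω = y} =
        ProbabilityTheory.cond R {ω | X₀ ω = x ∧ X₁ ω = y} := by
  intro x y hP
  set S := {ω | X₀ ω = x}
  set T := {ω | X₁ ω = y}
  change 0 < P (S ∩ T) at hP
  change P[|S ∩ T] = R[|S ∩ T]
  have hS : MeasurableSet S := hX₀ (measurableSet_singleton x)
  have hT : MeasurableSet T := hX₁ (measurableSet_singleton y)
  have hdensity : P[|S] = R[|S].withDensity fun ω ↦ h x (X₁ ω) :=
    Measure.ext fun A hA ↦ by
      rw [withDensity_apply _ hA]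
      exact hh x (hP.trans_le (measure_mono Set.inter_subset_left)) A hA
  have hconst : ∀ ω ∈ T, (h x (X₁ ω) : ℝ≥0∞) = h x y := fun ω hω ↦ by rw [show X₁ ω = y from hω]
  have hxy : (h x y : ℝ≥0∞) ≠ 0 := by
    intro hzero
    have hPT : P[T|S] = 0 := by
      rw [hdensity, ← Measure.restrict_apply_univ, restrict_withDensity_of_eqOn_const hT hconst,
        hzero, zero_smul, Measure.coe_zero, Pi.zero_apply]
    exact (cond_pos_of_inter_ne_zero hS hP.ne').ne' hPT
  calc P[|S ∩ T] = P[|S][|T] := (cond_cond_eq_cond_inter hS hT P).symm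
    _ = R[|S][|T] := by
      rw [hdensity, cond_withDensity_of_eqOn_const hT hconst hxy ENNReal.coe_ne_top]
    _ = R[|S ∩ T] := cond_cond_eq_cond_inter hS hT R

/-- If `supp P₀₁ ⊆ supp R₀₁` and there exists `h : 𝒳 × 𝒳 → [0,∞)` such that
`P^x = h(x, X₁)·R^x` for every `x` with `P₀(x) > 0`, then `P^{xy} = R^{xy}` for every
`(x,y) ∈ supp P₀₁`. -/
theorem stmt17 {Ω : Type*} [MeasurableSpace Ω] {𝒳 : Type*} [MeasurableSpace 𝒳]
    [MeasurableSingletonClass 𝒳] [Countable 𝒳]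
    (X₀ X₁ : Ω → 𝒳) (hX₀ : Measurable X₀) (hX₁ : Measurable X₁)
    (P R : Measure Ω) [IsProbabilityMeasure P] [IsProbabilityMeasure R]
    (hsupp : ∀ x y : 𝒳, 0 < P {ω | X₀ ω = x ∧ X₁ ω = y} →
      0 < R {ω | X₀ ω = x ∧ X₁ ω = y})
    (h : 𝒳 → 𝒳 → ℝ≥0)
    (hh : ∀ x : 𝒳, 0 < P {ω | X₀ ω = x} → ∀ A : Set Ω, MeasurableSet A →
      ProbabilityTheory.cond P {ω | X₀ ω = x} A =
        ∫⁻ ω in A, (h x (X₁ ω) : ℝ≥0∞) ∂(ProbabilityTheory.cond R {ω | X₀ ω = x})) :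
    ∀ x y : 𝒳, 0 < P {ω | X₀ ω = x ∧ X₁ ω = y} →
      ProbabilityTheory.cond P {ω | X₀ ω = x ∧ X₁ ω = y} =
        ProbabilityTheory.cond R {ω | X₀ ω = x ∧ X₁ ω = y} :=
  stmt17_general X₀ X₁ hX₀ hX₁ P R h hh
end

section
/- Let (Ω,ℱ) be a measurable space, 𝒳 a countable set with the discrete σ-algebra, X₀, X₁ : Ω → 𝒳 measurable, and R a probability measure on Ω. Let π be a probability measure on 𝒳×𝒳 with supp π ⊆ supp R₀₁, and define P := ∑_{(x,y) : π(x,y)>0} π(x,y)·R^{xy}. Then P is a probability measure on Ω that is absolutely continuous with respect to R, and P₀₁ = π. -/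
open MeasureTheory ProbabilityTheory
open scoped NNReal ENNReal

lemma tsum_singleton_eq_univ {𝒳 : Type*} [MeasurableSpace 𝒳] [MeasurableSingletonClass 𝒳]
    [Countable 𝒳] (μ : Measure 𝒳) : ∑' x : 𝒳, μ {x} = μ Set.univ := by
  rw [← Set.iUnion_of_singleton 𝒳]
  exact (measure_iUnion (fun a b hab => by simp [Set.disjoint_singleton, hab])
    (fun a => measurableSet_singleton a)).symm

/-- Let `π` be a probability measure on `𝒳 × 𝒳` with `supp π ⊆ supp R₀₁`, and
let `P := ∑_{(x,y)} π(x,y)·R^{xy}` be the corresponding mixture of bridges of `R` (the terms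
with `π(x,y) = 0` vanish).  Then `P` is a probability measure, `P ≪ R`, and `P₀₁ = π`. -/
theorem stmt18 {Ω : Type*} [MeasurableSpace Ω] {𝒳 : Type*} [MeasurableSpace 𝒳]
    [MeasurableSingletonClass 𝒳] [Countable 𝒳]
    (X₀ X₁ : Ω → 𝒳) (hX₀ : Measurable X₀) (hX₁ : Measurable X₁)
    (R : Measure Ω) [IsProbabilityMeasure R]
    (π : Measure (𝒳 × 𝒳)) [IsProbabilityMeasure π]
    (hsupp : ∀ x y : 𝒳, 0 < π {(x, y)} → 0 < R {ω | X₀ ω = x ∧ X₁ ω = y}) :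
    let P : Measure Ω := Measure.sum (fun p : 𝒳 × 𝒳 =>
      π {p} • ProbabilityTheory.cond R {ω | X₀ ω = p.1 ∧ X₁ ω = p.2})
    IsProbabilityMeasure P ∧ P ≪ R ∧
      ∀ x y : 𝒳, P {ω | X₀ ω = x ∧ X₁ ω = y} = π {(x, y)} := by
  classical
  intro P
  set s : 𝒳 × 𝒳 → Set Ω := fun p => {ω | X₀ ω = p.1 ∧ X₁ ω = p.2} with hs
  have hsm : ∀ p, MeasurableSet (s p) := by
    intro p
    have : s p = X₀ ⁻¹' {p.1} ∩ X₁ ⁻¹' {p.2} := by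
      ext ω; simp [hs]
    rw [this]
    exact (hX₀ (measurableSet_singleton _)).inter (hX₁ (measurableSet_singleton _))
  have hdisj : ∀ p q : 𝒳 × 𝒳, p ≠ q → s p ∩ s q = ∅ := by
    intro p q hpq
    ext ω
    simp only [hs, Set.mem_inter_iff, Set.mem_setOf_eq, Set.mem_empty_iff_false, iff_false]
    rintro ⟨⟨h1, h2⟩, h3, h4⟩
    exact hpq (Prod.ext (h1 ▸ h3.symm ▸ rfl) (h2 ▸ h4.symm ▸ rfl))
  -- key term computation
  have hterm : ∀ p q : 𝒳 × 𝒳,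
      π {p} * (ProbabilityTheory.cond R (s p)) (s q) = if p = q then π {q} else 0 := by
    intro p q
    rcases eq_or_ne p q with h | h
    · subst h
      rw [if_pos rfl]
      rcases eq_or_ne (π {p}) 0 with h0 | h0
      · simp [h0]
      · have hRpos : 0 < R (s p) := hsupp p.1 p.2 (pos_iff_ne_zero.mpr h0)
        rw [cond_apply (hsm p), Set.inter_self,
          ENNReal.inv_mul_cancel hRpos.ne' (measure_ne_top R _), mul_one]
    · rw [if_neg h, cond_apply (hsm p), hdisj p q h]
      simp
  have hP : ∀ q : 𝒳 × 𝒳, P (s q) = π {q} := by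
    intro q
    rw [Measure.sum_apply _ (hsm q)]
    simp only [Measure.smul_apply, smul_eq_mul]
    rw [tsum_congr (fun p => hterm p q), tsum_ite_eq]
  have hPuniv : P Set.univ = 1 := by
    rw [Measure.sum_apply _ MeasurableSet.univ]
    simp only [Measure.smul_apply, smul_eq_mul]
    have : ∀ p : 𝒳 × 𝒳, π {p} * (ProbabilityTheory.cond R (s p)) Set.univ = π {p} := by
      intro p
      rcases eq_or_ne (π {p}) 0 with h0 | h0
      · simp [h0]
      · have hRpos : 0 < R (s p) := hsupp p.1 p.2 (pos_iff_ne_zero.mpr h0)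
        rw [cond_apply (hsm p), Set.inter_univ,
          ENNReal.inv_mul_cancel hRpos.ne' (measure_ne_top R _), mul_one]
    rw [tsum_congr this, tsum_singleton_eq_univ, measure_univ]
  refine ⟨⟨hPuniv⟩, ?_, fun x y => hP (x, y)⟩
  exact Measure.absolutelyContinuous_sum_left
    (fun p => Measure.smul_absolutelyContinuous.trans cond_absolutelyContinuous)
end

section
/- Let (Ω,ℱ) be a measurable space, E and F countable sets with their discrete σ-algebras, Y : Ω → E and Z : Ω → F measurable maps, R a probability measure on Ω, and 𝒢 ⊆ ℱ a sub-σ-algebra with respect to which both Y and Z are measurable. Let B ∈ ℱ and assume that for every G ∈ 𝒢: R(B ∩ G) = ∑_{e ∈ E : R(Y=e)>0} R(B | {Y=e})·R(G ∩ {Y=e}). Let π : F → [0,1] with ∑_{f∈F} π(f) = 1 and with π(f) > 0 implying R(Z=f) > 0, and define the probability measure P := ∑_{f : π(f)>0} π(f)·R(· | {Z=f}). Then for every e ∈ E with P(Y=e) > 0 one has R(Y=e) > 0 and P(B | {Y=e}) = R(B | {Y=e}). -/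
/-!
For a `𝒢`-measurable set `G` inside the fiber `{Y = e}`, the hypothesis on `B` collapses to
`R (B ∩ G) = R(B | Y = e) · R G`. Taking `G = {Y = e} ∩ {Z = f}` shows that, under every
`R(· | Z = f)`, the event `B` takes up the fraction `R(B | Y = e)` of `{Y = e}`. This
proportionality survives scaling and summing, so it holds under the mixture `P` as well, and
`P ≪ R` gives `R(Y = e) > 0`.
-/

open MeasureTheory ProbabilityTheory Set
open scoped NNReal ENNReal

section Proportion

variable {Ω ι : Type*} {_ : MeasurableSpace Ω} {μ : Measure Ω} {s t : Set Ω} {c : ℝ≥0∞}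

lemma cond_eq_of_measure_inter_eq_mul (hs : MeasurableSet s) (h₀ : μ s ≠ 0) (hfin : μ s ≠ ∞)
    (h : μ (s ∩ t) = c * μ s) : μ[t|s] = c := by
  rw [cond_apply hs, h, mul_left_comm, ENNReal.inv_mul_cancel h₀ hfin, mul_one]

lemma cond_inter_eq_mul_of_measure_inter_eq_mul {S : Set Ω} (hs : MeasurableSet s)
    (ht : MeasurableSet t) (h : μ (S ∩ (s ∩ t)) = c * μ (S ∩ s)) :
    μ[s ∩ t|S] = c * μ[s|S] := by
  rw [cond_apply' (hs.inter ht), cond_apply' hs, h, mul_left_comm]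

lemma MeasureTheory.Measure.smul_apply_inter_eq_mul (w : ℝ≥0∞) (h : μ (s ∩ t) = c * μ s) :
    (w • μ) (s ∩ t) = c * (w • μ) s := by
  simp only [Measure.smul_apply, smul_eq_mul, h, mul_left_comm]

lemma MeasureTheory.Measure.sum_apply_inter_eq_mul {μ : ι → Measure Ω} (hs : MeasurableSet s)
    (ht : MeasurableSet t) (h : ∀ i, μ i (s ∩ t) = c * μ i s) :
    Measure.sum μ (s ∩ t) = c * Measure.sum μ s := by
  rw [Measure.sum_apply _ (hs.inter ht), Measure.sum_apply _ hs, ← ENNReal.tsum_mul_left]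
  exact tsum_congr h

lemma MeasureTheory.Measure.sum_smul_apply_le_tsum {μ : ι → Measure Ω} [∀ i, IsZeroOrProbabilityMeasure (μ i)]
    (w : ι → ℝ≥0∞) (s : Set Ω) : Measure.sum (fun i => w i • μ i) s ≤ ∑' i, w i :=
  calc Measure.sum (fun i => w i • μ i) s
      ≤ Measure.sum (fun i => w i • μ i) univ := measure_mono (subset_univ s)
    _ = ∑' i, w i * μ i univ := by
      simp only [Measure.sum_apply _ MeasurableSet.univ, Measure.smul_apply, smul_eq_mul]
    _ ≤ ∑' i, w i := ENNReal.tsum_le_tsum fun i => mul_le_of_le_one_right' prob_le_one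

end Proportion

lemma measure_inter_eq_cond_mul_of_subset_fiber {Ω E : Type*} {_ : MeasurableSpace Ω}
    {R : Measure Ω} {Y : Ω → E} {B G : Set Ω} {e : E}
    (hBG : R (B ∩ G) = ∑' e' : {e' : E // 0 < R (Y ⁻¹' {e'})},
      R[B|Y ⁻¹' {e'.1}] * R (G ∩ Y ⁻¹' {e'.1}))
    (he : 0 < R (Y ⁻¹' {e})) (hGe : G ⊆ Y ⁻¹' {e}) :
    R (B ∩ G) = R[B|Y ⁻¹' {e}] * R G := by
  rw [hBG, tsum_eq_single ⟨e, he⟩, inter_eq_left.2 hGe]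
  intro e' he'
  have hdisj : Disjoint G (Y ⁻¹' {e'.1}) :=
    ((disjoint_singleton.2 fun h => he' (Subtype.ext h.symm)).preimage Y).mono_left hGe
  rw [hdisj.inter_eq, measure_empty, mul_zero]

theorem stmt19_general {Ω : Type*} [m0 : MeasurableSpace Ω]
    {E F : Type*} [MeasurableSpace E] [MeasurableSingletonClass E]
    [MeasurableSpace F] [MeasurableSingletonClass F]
    (Y : Ω → E) (Z : Ω → F) (R : Measure Ω)
    (hY : Measurable[m0] Y)
    (B : Set Ω) (hB : MeasurableSet[m0] B)
    (𝒢 : MeasurableSpace Ω)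
    (hY𝒢 : Measurable[𝒢] Y) (hZ𝒢 : Measurable[𝒢] Z)
    (hrec : ∀ G : Set Ω, MeasurableSet[𝒢] G →
      R (B ∩ G) = ∑' e : {e : E // 0 < R (Y ⁻¹' {e})},
        ProbabilityTheory.cond R (Y ⁻¹' {e.1}) B * R (G ∩ Y ⁻¹' {e.1}))
    (π : F → ℝ≥0∞) (hπsum : ∑' f, π f = 1) :
    let P : @Measure Ω m0 :=
      Measure.sum (fun f : F => π f • ProbabilityTheory.cond R (Z ⁻¹' {f}))
    ∀ e : E, 0 < P (Y ⁻¹' {e}) →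
      0 < R (Y ⁻¹' {e}) ∧
      ProbabilityTheory.cond P (Y ⁻¹' {e}) B = ProbabilityTheory.cond R (Y ⁻¹' {e}) B := by
  intro P e hPe
  set A := Y ⁻¹' {e}
  have hA : MeasurableSet[m0] A := hY (measurableSet_singleton e)
  have hPR : P ≪ R :=
    Measure.absolutelyContinuous_sum_left fun f => cond_absolutelyContinuous.smul_left (π f)
  have hRA : 0 < R A := pos_iff_ne_zero.2 fun h => hPe.ne' (hPR h)
  have hfiber (f : F) : R (Z ⁻¹' {f} ∩ (A ∩ B)) = R[B|A] * R (Z ⁻¹' {f} ∩ A) := by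
    have hG : MeasurableSet[𝒢] (A ∩ Z ⁻¹' {f}) :=
      (hY𝒢 (measurableSet_singleton e)).inter (hZ𝒢 (measurableSet_singleton f))
    have := measure_inter_eq_cond_mul_of_subset_fiber (hrec _ hG) hRA inter_subset_left
    rwa [inter_comm (Z ⁻¹' {f}), inter_right_comm, inter_comm _ B, inter_comm (Z ⁻¹' {f}) A]
  -- otherwise `𝒢` is found as the `MeasurableSpace Ω` instance below
  clear hrec hY𝒢 hZ𝒢 𝒢
  have hPAB : P (A ∩ B) = R[B|A] * P A :=
    Measure.sum_apply_inter_eq_mul hA hB fun f => Measure.smul_apply_inter_eq_mul (π f)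
      (cond_inter_eq_mul_of_measure_inter_eq_mul hA hB (hfiber f))
  have hPA : P A ≠ ∞ :=
    ne_top_of_le_ne_top (hπsum ▸ ENNReal.one_ne_top) (Measure.sum_smul_apply_le_tsum π A)
  exact ⟨hRA, cond_eq_of_measure_inter_eq_mul hA hPe.ne' hPA hPAB⟩

/-- Let `Y : Ω → E`, `Z : Ω → F` with `E`, `F` countable, let `𝒢` be a
sub-σ-algebra with respect to which `Y` and `Z` are measurable, and let `B` be an event such
that `R(B ∩ G) = ∑_{e : R(Y=e)>0} R(B | Y=e)·R(G ∩ {Y=e})` for every `G ∈ 𝒢` (the conditional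
probability of `B` given `𝒢` only depends on `Y`).  If `P := ∑_f π(f)·R(· | Z=f)` is a
mixture of the `Z`-conditionings of `R` (with mixing weights `π`, `∑ π(f) = 1`, and
`π(f) > 0 ⇒ R(Z=f) > 0`; the terms with `π(f) = 0` vanish), then for every `e` with
`P(Y=e) > 0` one has `R(Y=e) > 0` and `P(B | Y=e) = R(B | Y=e)`. -/
theorem stmt19 {Ω : Type*} [m0 : MeasurableSpace Ω]
    {E F : Type*} [MeasurableSpace E] [MeasurableSingletonClass E] [Countable E]
    [MeasurableSpace F] [MeasurableSingletonClass F] [Countable F]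
    (Y : Ω → E) (Z : Ω → F) (R : Measure Ω) [IsProbabilityMeasure R]
    (hY : Measurable[m0] Y) (hZ : Measurable[m0] Z)
    (B : Set Ω) (hB : MeasurableSet[m0] B)
    (𝒢 : MeasurableSpace Ω) (h𝒢 : 𝒢 ≤ m0)
    (hY𝒢 : Measurable[𝒢] Y) (hZ𝒢 : Measurable[𝒢] Z)
    (hrec : ∀ G : Set Ω, MeasurableSet[𝒢] G →
      R (B ∩ G) = ∑' e : {e : E // 0 < R (Y ⁻¹' {e})},
        ProbabilityTheory.cond R (Y ⁻¹' {e.1}) B * R (G ∩ Y ⁻¹' {e.1}))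
    (π : F → ℝ≥0∞) (hπ₁ : ∀ f, π f ≤ 1) (hπsum : ∑' f, π f = 1)
    (hπsupp : ∀ f : F, 0 < π f → 0 < R (Z ⁻¹' {f})) :
    let P : @Measure Ω m0 :=
      Measure.sum (fun f : F => π f • ProbabilityTheory.cond R (Z ⁻¹' {f}))
    ∀ e : E, 0 < P (Y ⁻¹' {e}) →
      0 < R (Y ⁻¹' {e}) ∧
      ProbabilityTheory.cond P (Y ⁻¹' {e}) B = ProbabilityTheory.cond R (Y ⁻¹' {e}) B :=
  stmt19_general (m0 := m0) Y Z R hY B hB 𝒢 hY𝒢 hZ𝒢 hrec π hπsum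
end
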